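/- arXiv:1301.7452 — 9 statements merged into one kernel-verified Lean document; each statement's English description precedes it below -/
import Mathlib

section
/- For any Young diagram D (viewed as a subset of Z_{\geq 0}^2) and any non-negative integers a and l, the number of boxes c in D with arm length a(c) = a and leg length l(c) = l is exactly one less than the number of boxes c' in the complement (Z_{\geq 0})^2 \ D with arm length a and leg length l. -/
/-- A Young diagram: a finite down-closed subset of ℕ². -/
def IsYoung (D : Finset (ℕ × ℕ)) : Prop :=
  ∀ x y x' y', (x, y) ∈ D → x' ≤ x → y' ≤ y → (x', y') ∈ D

/-- Arm length of a box inside the diagram. -/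
def arm (D : Finset (ℕ × ℕ)) (c : ℕ × ℕ) : ℕ :=
  (D.filter fun d => d.2 = c.2 ∧ c.1 < d.1).card

/-- Leg length of a box inside the diagram. -/
def leg (D : Finset (ℕ × ℕ)) (c : ℕ × ℕ) : ℕ :=
  (D.filter fun d => d.1 = c.1 ∧ c.2 < d.2).card

/-- Arm length of a box in the complement of the diagram. -/
def coArm (D : Finset (ℕ × ℕ)) (c : ℕ × ℕ) : ℕ :=
  ((Finset.range c.1).filter fun x' => (x', c.2) ∉ D).card

/-- Leg length of a box in the complement of the diagram. -/
def coLeg (D : Finset (ℕ × ℕ)) (c : ℕ × ℕ) : ℕ :=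
  ((Finset.range c.2).filter fun y' => (c.1, y') ∉ D).card

/-
Let `r j` be the number of cells of `D` with second coordinate `j`; `r` is non-increasing and
eventually zero. A cell `(i, j) ∈ D` has arm `a` and leg `l` iff `i + a + 1 = r j` and
`r j - r (j + l) ≤ a < r j - r (j + l + 1)`; a cell `(i, k + l) ∉ D` has arm `a` and leg `l` iff
`i = r (k + l) + a` and `r k - r (k + l) ≤ a < r (k - 1) - r (k + l)`, the last inequality being
void for `k = 0`. Hence both kinds of cells are determined by their second coordinate, and they are
the upward, respectively downward, crossings of the level `a` by the sequence
`∞, r 0 - r l, r 0 - r (l + 1), r 1 - r (l + 1), r 1 - r (l + 2), …`,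
which alternately falls and rises and ends at `0`. Starting above `a` and ending at or below it,
the sequence crosses downward exactly once more than upward.
-/

open Finset

theorem IsYoung.isLowerSet {D : Finset (ℕ × ℕ)} (hD : IsYoung D) :
    IsLowerSet (D : Set (ℕ × ℕ)) :=
  fun _ _ hle hc => hD _ _ _ _ hc hle.1 hle.2

/-- Read `P 0, Q 0, P 1, Q 1, …` as one sequence in which a true `Q` forces both neighbours to be
true. The left side counts its rises from false to true (with a false value before `P 0`), the
right side its falls. -/
theorem Nat.count_rises_eq_count_falls_add (P Q : ℕ → Prop) [DecidablePred P] [DecidablePred Q]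
    (hQP : ∀ n, Q n → P n) (hQP_succ : ∀ n, Q n → P (n + 1)) (N : ℕ) :
    Nat.count (fun n => P n ∧ (n = 0 ∨ ¬Q (n - 1))) (N + 1) =
      Nat.count (fun n => P n ∧ ¬Q n) (N + 1) + if Q N then 1 else 0 := by
  induction N with
  | zero => by_cases h : Q 0 <;> simp [Nat.count_succ, h, hQP 0]
  | succ N ih =>
    rw [Nat.count_succ, ih, Nat.count_succ _ (N + 1)]
    have := hQP (N + 1)
    have := hQP_succ N
    by_cases Q N <;> by_cases Q (N + 1) <;> by_cases P (N + 1) <;> simp_all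

namespace YoungDiagram

/-! In Mathlib's convention the first coordinate of a cell indexes its row, so the arm of a cell
`(i, j)` (cells `(i', j)` with `i < i'`) lies in column `j` and is measured by `colLen j`, while
the leg lies in row `i` and is measured by `rowLen i`. -/

variable {μ : YoungDiagram}

theorem lt_rowLen_iff_lt_colLen {i j : ℕ} : j < μ.rowLen i ↔ i < μ.colLen j :=
  mem_iff_lt_rowLen.symm.trans mem_iff_lt_colLen

theorem colLen_eq_zero_of_sup_lt {j : ℕ} (hj : μ.cells.sup Prod.snd < j) : μ.colLen j = 0 :=
  Nat.eq_zero_of_not_pos fun h => hj.not_ge (le_sup (f := Prod.snd) (mem_iff_lt_colLen.2 h))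

theorem arm_cells (i j : ℕ) : arm μ.cells (i, j) = μ.colLen j - i - 1 := by
  have : {d ∈ μ.cells | d.2 = j ∧ i < d.1} = Ioo i (μ.colLen j) ×ˢ {j} := by
    ext ⟨i', j'⟩
    simp only [mem_filter, mem_product, mem_Ioo, mem_singleton, mem_cells]
    constructor
    · rintro ⟨h, rfl, hi⟩
      exact ⟨⟨hi, mem_iff_lt_colLen.1 h⟩, rfl⟩
    · rintro ⟨⟨hi, h⟩, rfl⟩
      exact ⟨mem_iff_lt_colLen.2 h, rfl, hi⟩
  rw [arm, this, card_product, Nat.card_Ioo, card_singleton, mul_one]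

theorem coArm_cells (i j : ℕ) : coArm μ.cells (i, j) = i - μ.colLen j := by
  have : {i' ∈ range i | (i', j) ∉ μ.cells} = Ico (μ.colLen j) i := by
    ext i'
    simp only [mem_filter, mem_range, mem_Ico, mem_cells, mem_iff_lt_colLen]
    omega
  rw [coArm, this, Nat.card_Ico]

theorem arm_transpose_cells (i j : ℕ) : arm μ.transpose.cells (j, i) = leg μ.cells (i, j) := by
  simp only [arm, leg, transpose, Equiv.finsetCongr_apply, filter_map, card_map,
    Function.comp_def]
  rfl

theorem coArm_transpose_cells (i j : ℕ) :
    coArm μ.transpose.cells (j, i) = coLeg μ.cells (i, j) := by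
  simp [coArm, coLeg]

theorem leg_cells (i j : ℕ) : leg μ.cells (i, j) = μ.rowLen i - j - 1 := by
  rw [← arm_transpose_cells, arm_cells, colLen_transpose]

theorem coLeg_cells (i j : ℕ) : coLeg μ.cells (i, j) = j - μ.rowLen i := by
  rw [← coArm_transpose_cells, coArm_cells, colLen_transpose]

theorem coLeg_cells_le (i j : ℕ) : coLeg μ.cells (i, j) ≤ j :=
  (card_filter_le _ _).trans (card_range j).le

theorem mem_arm_leg_iff {a l i j : ℕ} :
    (i, j) ∈ μ.cells ∧ arm μ.cells (i, j) = a ∧ leg μ.cells (i, j) = l ↔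
      i + a + 1 = μ.colLen j ∧ i < μ.colLen (j + l) ∧ μ.colLen (j + l + 1) ≤ i := by
  have h₀ := lt_rowLen_iff_lt_colLen (μ := μ) (i := i) (j := j)
  have h₁ := lt_rowLen_iff_lt_colLen (μ := μ) (i := i) (j := j + l)
  have h₂ := lt_rowLen_iff_lt_colLen (μ := μ) (i := i) (j := j + l + 1)
  rw [mem_cells, mem_iff_lt_colLen, arm_cells, leg_cells]
  omega

theorem notMem_coArm_coLeg_iff {a l i k : ℕ} :
    (i, k + l) ∉ μ.cells ∧ coArm μ.cells (i, k + l) = a ∧ coLeg μ.cells (i, k + l) = l ↔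
      i = μ.colLen (k + l) + a ∧ μ.colLen k ≤ i ∧ (k = 0 ∨ i < μ.colLen (k - 1)) := by
  have h₀ := lt_rowLen_iff_lt_colLen (μ := μ) (i := i) (j := k + l)
  have h₁ := lt_rowLen_iff_lt_colLen (μ := μ) (i := i) (j := k)
  have h₂ := lt_rowLen_iff_lt_colLen (μ := μ) (i := i) (j := k - 1)
  rw [mem_cells, mem_iff_lt_colLen, coArm_cells, coLeg_cells]
  omega

theorem card_arm_leg_eq_count (a l : ℕ) {N : ℕ} (hN : ∀ j ≥ N, μ.colLen j = 0) :
    #{c ∈ μ.cells | arm μ.cells c = a ∧ leg μ.cells c = l} =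
      Nat.count (fun j => μ.colLen j ≤ μ.colLen (j + l) + a ∧
        ¬μ.colLen j ≤ μ.colLen (j + l + 1) + a) (N + 1) := by
  rw [Nat.count_eq_card_filter_range]
  refine card_nbij' Prod.snd (fun j => (μ.colLen j - a - 1, j)) ?_ ?_ ?_ fun _ _ => rfl
  · rintro ⟨i, j⟩ hc
    have := mem_arm_leg_iff.1 (mem_filter.1 hc)
    have := hN j
    simp only [coe_filter, mem_range, Set.mem_ofPred_eq]
    omega
  · intro j hj
    simp only [coe_filter, mem_range, Set.mem_ofPred_eq] at hj ⊢
    exact mem_arm_leg_iff.2 (by omega)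
  · rintro ⟨i, j⟩ hc
    obtain ⟨hi, -⟩ := mem_arm_leg_iff.1 (mem_filter.1 hc)
    exact Prod.ext (by dsimp only; omega) rfl

theorem ncard_coArm_coLeg_eq_count (a l : ℕ) {N : ℕ} (hN : ∀ j ≥ N, μ.colLen j = 0) :
    {c : ℕ × ℕ | c ∉ μ.cells ∧ coArm μ.cells c = a ∧ coLeg μ.cells c = l}.ncard =
      Nat.count (fun k => μ.colLen k ≤ μ.colLen (k + l) + a ∧
        (k = 0 ∨ ¬μ.colLen (k - 1) ≤ μ.colLen (k - 1 + l + 1) + a)) (N + 1) := by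
  rw [Nat.count_eq_card_filter_range, ← Set.ncard_coe_finset]
  have shift : ∀ k, k ≠ 0 → k - 1 + l + 1 = k + l := by omega
  refine Set.BijOn.ncard_eq (f := fun c => c.2 - l) (Set.InvOn.bijOn
    (f' := fun k => (μ.colLen (k + l) + a, k + l)) ⟨?_, fun k _ => Nat.add_sub_cancel k l⟩ ?_ ?_)
  · rintro ⟨i, j⟩ hc
    obtain ⟨k, rfl⟩ := Nat.exists_eq_add_of_le' (hc.2.2 ▸ coLeg_cells_le i j)
    simp only [Nat.add_sub_cancel, (notMem_coArm_coLeg_iff.1 hc).1]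
  · rintro ⟨i, j⟩ hc
    obtain ⟨k, rfl⟩ := Nat.exists_eq_add_of_le' (hc.2.2 ▸ coLeg_cells_le i j)
    obtain ⟨rfl, hk, hk'⟩ := notMem_coArm_coLeg_iff.1 hc
    have := hN (k - 1)
    simp only [coe_filter, mem_range, Set.mem_ofPred_eq, Nat.add_sub_cancel]
    rcases eq_or_ne k 0 with h | h
    · omega
    · rw [shift k h]; omega
  · intro k hk
    simp only [coe_filter, mem_range, Set.mem_ofPred_eq] at hk
    refine notMem_coArm_coLeg_iff.2 ⟨rfl, hk.2.1, ?_⟩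
    rcases eq_or_ne k 0 with h | h
    · exact .inl h
    · rw [shift k h] at hk; omega

end YoungDiagram

theorem hooks_inside_outside (D : Finset (ℕ × ℕ)) (hD : IsYoung D) (a l : ℕ) :
    {c : ℕ × ℕ | c ∉ D ∧ coArm D c = a ∧ coLeg D c = l}.ncard
      = (D.filter fun c => arm D c = a ∧ leg D c = l).card + 1 := by
  let μ : YoungDiagram := ⟨D, hD.isLowerSet⟩
  have hN : ∀ j ≥ D.sup Prod.snd + 1, μ.colLen j = 0 := fun _ hj =>
    YoungDiagram.colLen_eq_zero_of_sup_lt hj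
  have hQP : ∀ j, μ.colLen j ≤ μ.colLen (j + l + 1) + a → μ.colLen j ≤ μ.colLen (j + l) + a :=
    fun j h => h.trans (Nat.add_le_add_right (μ.colLen_anti _ _ (Nat.le_succ _)) a)
  have hQP_succ : ∀ j, μ.colLen j ≤ μ.colLen (j + l + 1) + a →
      μ.colLen (j + 1) ≤ μ.colLen (j + 1 + l) + a :=
    fun j h => (μ.colLen_anti _ _ (Nat.le_succ j)).trans (Nat.add_right_comm j l 1 ▸ h)
  rw [μ.ncard_coArm_coLeg_eq_count a l hN, μ.card_arm_leg_eq_count a l hN,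
    Nat.count_rises_eq_count_falls_add _ _ hQP hQP_succ, if_pos (by simp [hN])]
end

section
/- For any Young diagram D and any non-negative integers a, l, the number of boxes in the complement \overline{D} = (Z_{\geq 0})^2 \ D with arm length a and leg length l is finite (in fact equal to one plus the number of boxes in D with arm a and leg l, hence at most |D| + 1). -/
namespace CHF
open Finset

/-- Row length. -/
def row (D : Finset (ℕ × ℕ)) (y : ℕ) : ℕ := (D.filter fun d => d.2 = y).card
/-- Column length. -/
def col (D : Finset (ℕ × ℕ)) (x : ℕ) : ℕ := (D.filter fun d => d.1 = x).card

lemma card_filter_Ico {C b1 b2 : ℕ} (P : ℕ → Prop) [DecidablePred P]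
    (hb : b2 ≤ C) (hP : ∀ x < C, (P x ↔ b1 ≤ x ∧ x < b2)) :
    ((Finset.range C).filter P).card = b2 - b1 := by
  have h : (Finset.range C).filter P = Finset.Ico b1 b2 := by
    ext x
    simp only [Finset.mem_filter, Finset.mem_range, Finset.mem_Ico]
    constructor
    · rintro ⟨hx, hPx⟩; exact (hP x hx).1 hPx
    · intro hx
      have hxC : x < C := lt_of_lt_of_le hx.2 hb
      exact ⟨hxC, (hP x hxC).2 hx⟩
  rw [h, Nat.card_Ico]

lemma mem_down {A : Finset ℕ} (hA : ∀ m ∈ A, ∀ n, n ≤ m → n ∈ A) (n : ℕ) :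
    n ∈ A ↔ n < A.card := by
  constructor
  · intro hn
    have h1 : Finset.range (n + 1) ⊆ A := by
      intro m hm
      exact hA n hn m (Nat.lt_succ_iff.mp (Finset.mem_range.mp hm))
    have := Finset.card_le_card h1
    simpa using this
  · intro hn
    by_contra hmem
    have h1 : A ⊆ Finset.range n := by
      intro m hm
      rw [Finset.mem_range]
      by_contra h
      exact hmem (hA m hm n (by omega))
    have := Finset.card_le_card h1
    simp only [Finset.card_range] at this
    omega

variable {D : Finset (ℕ × ℕ)}

lemma mem_iff_row (hD : IsYoung D) (x y : ℕ) : (x, y) ∈ D ↔ x < row D y := by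
  have hmem : ∀ n, n ∈ (D.filter fun d => d.2 = y).image Prod.fst ↔ (n, y) ∈ D := by
    intro n
    simp only [Finset.mem_image, Finset.mem_filter]
    constructor
    · rintro ⟨d, ⟨hd, hdy⟩, hdx⟩
      have : d = (n, y) := by
        rcases d with ⟨d1, d2⟩
        simp_all
      rwa [this] at hd
    · intro h; exact ⟨(n, y), ⟨h, rfl⟩, rfl⟩
  have hA : ∀ m ∈ (D.filter fun d => d.2 = y).image Prod.fst, ∀ n, n ≤ m →
      n ∈ (D.filter fun d => d.2 = y).image Prod.fst := by
    intro m hm n hn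
    rw [hmem] at hm ⊢
    exact hD m y n y hm hn le_rfl
  have hinj : Set.InjOn Prod.fst (↑(D.filter fun d => d.2 = y) : Set (ℕ × ℕ)) := by
    intro d hd d' hd' h
    simp only [Finset.coe_filter, Set.mem_setOf_eq] at hd hd'
    exact Prod.ext h (hd.2.trans hd'.2.symm)
  have himg : row D y = ((D.filter fun d => d.2 = y).image Prod.fst).card := by
    rw [Finset.card_image_of_injOn hinj]
    rfl
  rw [himg, ← mem_down hA x, hmem]

lemma mem_iff_col (hD : IsYoung D) (x y : ℕ) : (x, y) ∈ D ↔ y < col D x := by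
  have hmem : ∀ n, n ∈ (D.filter fun d => d.1 = x).image Prod.snd ↔ (x, n) ∈ D := by
    intro n
    simp only [Finset.mem_image, Finset.mem_filter]
    constructor
    · rintro ⟨d, ⟨hd, hdx⟩, hdy⟩
      have : d = (x, n) := by
        rcases d with ⟨d1, d2⟩
        simp_all
      rwa [this] at hd
    · intro h; exact ⟨(x, n), ⟨h, rfl⟩, rfl⟩
  have hA : ∀ m ∈ (D.filter fun d => d.1 = x).image Prod.snd, ∀ n, n ≤ m →
      n ∈ (D.filter fun d => d.1 = x).image Prod.snd := by
    intro m hm n hn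
    rw [hmem] at hm ⊢
    exact hD x m x n hm le_rfl hn
  have hinj : Set.InjOn Prod.snd (↑(D.filter fun d => d.1 = x) : Set (ℕ × ℕ)) := by
    intro d hd d' hd' h
    simp only [Finset.coe_filter, Set.mem_setOf_eq] at hd hd'
    exact Prod.ext (hd.2.trans hd'.2.symm) h
  have himg : col D x = ((D.filter fun d => d.1 = x).image Prod.snd).card := by
    rw [Finset.card_image_of_injOn hinj]
    rfl
  rw [himg, ← mem_down hA y, hmem]

lemma lt_col_iff (hD : IsYoung D) (x y : ℕ) : y < col D x ↔ x < row D y :=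
  (mem_iff_col hD x y).symm.trans (mem_iff_row hD x y)

lemma row_anti (hD : IsYoung D) {y y' : ℕ} (h : y ≤ y') : row D y' ≤ row D y := by
  by_contra hc
  push_neg at hc
  have h1 : (row D y, y') ∈ D := (mem_iff_row hD _ _).2 hc
  have h2 : (row D y, y) ∈ D := hD _ _ _ _ h1 le_rfl h
  have := (mem_iff_row hD _ _).1 h2
  omega

lemma col_anti (hD : IsYoung D) {x x' : ℕ} (h : x ≤ x') : col D x' ≤ col D x := by
  by_contra hc
  push_neg at hc
  have h1 : (x', col D x) ∈ D := (mem_iff_col hD _ _).2 hc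
  have h2 : (x, col D x) ∈ D := hD _ _ _ _ h1 h le_rfl
  have := (mem_iff_col hD _ _).1 h2
  omega

lemma arm_eq (hD : IsYoung D) (x y : ℕ) : arm D (x, y) = row D y - (x + 1) := by
  have harm : arm D (x, y) = (D.filter (fun d => d.2 = y ∧ x < d.1)).card := rfl
  have himg : D.filter (fun d => d.2 = y ∧ x < d.1)
      = ((Finset.range (row D y)).filter (fun x' => x < x')).image (fun x' => (x', y)) := by
    ext d
    simp only [Finset.mem_filter, Finset.mem_image, Finset.mem_range]
    constructor
    · rintro ⟨hd, hdy, hdx⟩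
      refine ⟨d.1, ⟨?_, hdx⟩, ?_⟩
      · rw [← mem_iff_row hD d.1 y, ← hdy]
        exact hd
      · exact Prod.ext rfl hdy.symm
    · rintro ⟨x', ⟨hx', hxx'⟩, rfl⟩
      exact ⟨(mem_iff_row hD x' y).2 hx', rfl, hxx'⟩
  rw [harm, himg, Finset.card_image_of_injOn (by
    intro u _ v _ h
    simpa using congrArg Prod.fst h)]
  exact card_filter_Ico _ le_rfl (fun x' hx' => by omega)

lemma leg_eq (hD : IsYoung D) (x y : ℕ) : leg D (x, y) = col D x - (y + 1) := by
  have hleg : leg D (x, y) = (D.filter (fun d => d.1 = x ∧ y < d.2)).card := rfl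
  have himg : D.filter (fun d => d.1 = x ∧ y < d.2)
      = ((Finset.range (col D x)).filter (fun y' => y < y')).image (fun y' => (x, y')) := by
    ext d
    simp only [Finset.mem_filter, Finset.mem_image, Finset.mem_range]
    constructor
    · rintro ⟨hd, hdx, hdy⟩
      refine ⟨d.2, ⟨?_, hdy⟩, ?_⟩
      · rw [← mem_iff_col hD x d.2, ← hdx]
        exact hd
      · exact Prod.ext hdx.symm rfl
    · rintro ⟨y', ⟨hy', hyy'⟩, rfl⟩
      exact ⟨(mem_iff_col hD x y').2 hy', rfl, hyy'⟩
  rw [hleg, himg, Finset.card_image_of_injOn (by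
    intro u _ v _ h
    simpa using congrArg Prod.snd h)]
  exact card_filter_Ico _ le_rfl (fun y' hy' => by omega)

lemma coArm_eq (hD : IsYoung D) {x y : ℕ} (h : row D y ≤ x) :
    coArm D (x, y) = x - row D y := by
  have hco : coArm D (x, y) = ((Finset.range x).filter (fun x' => (x', y) ∉ D)).card := rfl
  rw [hco]
  refine card_filter_Ico _ le_rfl (fun x' hx' => ?_)
  rw [mem_iff_row hD]
  omega

lemma coLeg_eq (hD : IsYoung D) {x y : ℕ} (h : col D x ≤ y) :
    coLeg D (x, y) = y - col D x := by
  have hco : coLeg D (x, y) = ((Finset.range y).filter (fun y' => (x, y') ∉ D)).card := rfl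
  rw [hco]
  refine card_filter_Ico _ le_rfl (fun y' hy' => ?_)
  rw [mem_iff_col hD]
  omega

/-! ### Boundary path indices -/

/-- `RR D a l` : number of vertical steps of the truncated boundary path. -/
def RR (D : Finset (ℕ × ℕ)) (a l : ℕ) : ℕ := col D 0 + (a + l + 1)
/-- `CC D a l` : number of horizontal steps. -/
def CC (D : Finset (ℕ × ℕ)) (a l : ℕ) : ℕ := row D 0 + (a + l + 1)
/-- index of the horizontal boundary step atop column `x`. -/
def hIdx (D : Finset (ℕ × ℕ)) (a l x : ℕ) : ℕ := x + (RR D a l - col D x)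
/-- index of the vertical boundary step at the end of row `y`. -/
def vIdx (D : Finset (ℕ × ℕ)) (a l y : ℕ) : ℕ := row D y + (RR D a l - 1 - y)
/-- number of horizontal steps in the window of length `a+l+1` starting at `i`. -/
def hh (D : Finset (ℕ × ℕ)) (a l i : ℕ) : ℕ :=
  ((Finset.range (CC D a l)).filter fun x =>
    i ≤ hIdx D a l x ∧ hIdx D a l x < i + (a + l + 1)).card
/-- number of columns whose horizontal step has index `j` (0 or 1). -/
def cc (D : Finset (ℕ × ℕ)) (a l j : ℕ) : ℕ :=
  ((Finset.range (CC D a l)).filter fun x => hIdx D a l x = j).card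

variable (a l : ℕ)

lemma col_le0 (hD : IsYoung D) (x : ℕ) : col D x ≤ col D 0 := col_anti hD (Nat.zero_le x)
lemma row_le0 (hD : IsYoung D) (y : ℕ) : row D y ≤ row D 0 := row_anti hD (Nat.zero_le y)

lemma hIdx_lt_iff (hD : IsYoung D) (x x' : ℕ) :
    hIdx D a l x < hIdx D a l x' ↔ x < x' := by
  have key : ∀ u v : ℕ, u < v → hIdx D a l u < hIdx D a l v := by
    intro u v huv
    have h1 := col_anti hD (le_of_lt huv)
    have h2 := col_le0 hD u
    unfold hIdx RR
    omega
  constructor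
  · intro h
    by_contra hc
    push_neg at hc
    rcases Nat.lt_or_ge x' x with h' | h'
    · have := key x' x h'
      omega
    · have hxx : x' = x := by omega
      rw [hxx] at h
      exact lt_irrefl _ h
  · exact key x x'

lemma hIdx_injEq (hD : IsYoung D) {x x' : ℕ} (h : hIdx D a l x = hIdx D a l x') : x = x' := by
  rcases Nat.lt_trichotomy x x' with h1 | h1 | h1
  · have := (hIdx_lt_iff a l hD x x').2 h1; omega
  · exact h1
  · have := (hIdx_lt_iff a l hD x' x).2 h1; omega

lemma vIdx_anti (hD : IsYoung D) {y y' : ℕ} (h : y < y') (hy' : y' < RR D a l) :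
    vIdx D a l y' < vIdx D a l y := by
  have h1 := row_anti hD (le_of_lt h)
  unfold vIdx RR at *
  omega

lemma hIdx_lt_vIdx_iff (hD : IsYoung D) (x y : ℕ) (hy : y < RR D a l) :
    hIdx D a l x < vIdx D a l y ↔ x < row D y := by
  have hcx := col_le0 hD x
  by_cases hx : x < row D y
  · have h2 : y < col D x := (lt_col_iff hD x y).2 hx
    refine iff_of_true ?_ hx
    unfold hIdx vIdx RR at *
    omega
  · have h2 : ¬ y < col D x := fun h => hx ((lt_col_iff hD x y).1 h)
    refine iff_of_false ?_ hx
    unfold hIdx vIdx RR at *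
    omega

lemma vIdx_lt_hIdx_iff (hD : IsYoung D) (x y : ℕ) (hy : y < RR D a l) :
    vIdx D a l y < hIdx D a l x ↔ row D y ≤ x := by
  have hcx := col_le0 hD x
  by_cases hx : x < row D y
  · have h2 : y < col D x := (lt_col_iff hD x y).2 hx
    refine iff_of_false ?_ (by omega)
    unfold hIdx vIdx RR at *
    omega
  · have h2 : ¬ y < col D x := fun h => hx ((lt_col_iff hD x y).1 h)
    refine iff_of_true ?_ (by omega)
    unfold hIdx vIdx RR at *
    omega

lemma cover (hD : IsYoung D) (i : ℕ) (hi : i < RR D a l + CC D a l) :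
    (∃ x < CC D a l, hIdx D a l x = i) ∨ (∃ y < RR D a l, vIdx D a l y = i) := by
  classical
  set R := RR D a l with hR
  set C := CC D a l with hC
  set V := (Finset.range R).image (vIdx D a l) with hV
  set H := (Finset.range C).image (hIdx D a l) with hH
  have hVcard : V.card = R := by
    rw [hV, Finset.card_image_of_injOn, Finset.card_range]
    intro u hu v hv huv
    simp only [Finset.coe_range, Set.mem_Iio] at hu hv
    by_contra hne
    rcases Nat.lt_trichotomy u v with h1 | h1 | h1
    · have := vIdx_anti a l hD h1 hv; omega
    · exact hne h1
    · have := vIdx_anti a l hD h1 hu; omega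
  have hHcard : H.card = C := by
    rw [hH, Finset.card_image_of_injOn, Finset.card_range]
    intro u _ v _ huv
    exact hIdx_injEq a l hD huv
  have hdisj : Disjoint V H := by
    rw [Finset.disjoint_left]
    rintro j hjV hjH
    rw [hV, Finset.mem_image] at hjV
    rw [hH, Finset.mem_image] at hjH
    obtain ⟨y, hy, hyj⟩ := hjV
    obtain ⟨x, hx, hxj⟩ := hjH
    rw [Finset.mem_range] at hy hx
    have h1 := hIdx_lt_vIdx_iff a l hD x y hy
    have h2 := vIdx_lt_hIdx_iff a l hD x y hy
    omega
  have hsub : V ∪ H ⊆ Finset.range (R + C) := by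
    intro j hj
    rw [Finset.mem_union] at hj
    rw [Finset.mem_range]
    rcases hj with hj | hj
    · rw [hV, Finset.mem_image] at hj
      obtain ⟨y, hy, hyj⟩ := hj
      rw [Finset.mem_range] at hy
      have := row_le0 hD y
      have hr0 : row D 0 < C := by rw [hC]; unfold CC; omega
      unfold vIdx at hyj
      omega
    · rw [hH, Finset.mem_image] at hj
      obtain ⟨x, hx, hxj⟩ := hj
      rw [Finset.mem_range] at hx
      unfold hIdx at hxj
      have : RR D a l - col D x ≤ R := by rw [hR]; omega
      omega
  have hcard : (Finset.range (R + C)).card ≤ (V ∪ H).card := by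
    rw [Finset.card_union_of_disjoint hdisj, hVcard, hHcard, Finset.card_range]
  have heq : V ∪ H = Finset.range (R + C) := Finset.eq_of_subset_of_card_le hsub hcard
  have hiu : i ∈ V ∪ H := by rw [heq, Finset.mem_range]; exact hi
  rw [Finset.mem_union] at hiu
  rcases hiu with h | h
  · right
    rw [hV, Finset.mem_image] at h
    obtain ⟨y, hy, hyj⟩ := h
    exact ⟨y, Finset.mem_range.mp hy, hyj⟩
  · left
    rw [hH, Finset.mem_image] at h
    obtain ⟨x, hx, hxj⟩ := h
    exact ⟨x, Finset.mem_range.mp hx, hxj⟩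

lemma cc_le_one (hD : IsYoung D) (j : ℕ) : cc D a l j ≤ 1 := by
  rw [cc]
  apply Finset.card_le_one.2
  intro u hu v hv
  rw [Finset.mem_filter] at hu hv
  exact hIdx_injEq a l hD (hu.2.trans hv.2.symm)

lemma step_eq (i : ℕ) :
    hh D a l i + cc D a l (i + (a + l + 1)) = hh D a l (i + 1) + cc D a l i := by
  classical
  set k := a + l + 1 with hk
  have hsplit1 : (Finset.range (CC D a l)).filter
        (fun x => i ≤ hIdx D a l x ∧ hIdx D a l x ≤ i + k)
      = ((Finset.range (CC D a l)).filter
          (fun x => i ≤ hIdx D a l x ∧ hIdx D a l x < i + k)) ∪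
        ((Finset.range (CC D a l)).filter (fun x => hIdx D a l x = i + k)) := by
    rw [← Finset.filter_or]
    exact Finset.filter_congr (fun x _ => by omega)
  have hsplit2 : (Finset.range (CC D a l)).filter
        (fun x => i ≤ hIdx D a l x ∧ hIdx D a l x ≤ i + k)
      = ((Finset.range (CC D a l)).filter
          (fun x => i + 1 ≤ hIdx D a l x ∧ hIdx D a l x < i + 1 + k)) ∪
        ((Finset.range (CC D a l)).filter (fun x => hIdx D a l x = i)) := by
    rw [← Finset.filter_or]
    exact Finset.filter_congr (fun x _ => by omega)
  have hd1 : Disjoint ((Finset.range (CC D a l)).filter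
        (fun x => i ≤ hIdx D a l x ∧ hIdx D a l x < i + k))
      ((Finset.range (CC D a l)).filter (fun x => hIdx D a l x = i + k)) := by
    rw [Finset.disjoint_left]
    intro x hx hx'
    rw [Finset.mem_filter] at hx hx'
    omega
  have hd2 : Disjoint ((Finset.range (CC D a l)).filter
        (fun x => i + 1 ≤ hIdx D a l x ∧ hIdx D a l x < i + 1 + k))
      ((Finset.range (CC D a l)).filter (fun x => hIdx D a l x = i)) := by
    rw [Finset.disjoint_left]
    intro x hx hx'
    rw [Finset.mem_filter] at hx hx'
    omega
  have e1 := Finset.card_union_of_disjoint hd1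
  have e2 := Finset.card_union_of_disjoint hd2
  rw [← hsplit1] at e1
  rw [← hsplit2] at e2
  unfold hh cc
  rw [← hk]
  omega

lemma hh_zero (hD : IsYoung D) : hh D a l 0 = 0 := by
  rw [hh, Finset.card_eq_zero, Finset.filter_eq_empty_iff]
  intro x _
  have h1 := col_le0 hD x
  unfold hIdx RR
  omega

lemma hh_last (hD : IsYoung D) :
    hh D a l (RR D a l + CC D a l - (a + l + 1)) = a + l + 1 := by
  classical
  have hRdef : RR D a l = col D 0 + (a + l + 1) := rfl
  have hCdef : CC D a l = row D 0 + (a + l + 1) := rfl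
  have hfe : (Finset.range (CC D a l)).filter
        (fun x => RR D a l + CC D a l - (a + l + 1) ≤ hIdx D a l x ∧
          hIdx D a l x < RR D a l + CC D a l - (a + l + 1) + (a + l + 1))
      = (Finset.range (CC D a l)).filter
        (fun x => RR D a l + CC D a l - (a + l + 1) ≤ hIdx D a l x) := by
    apply Finset.filter_congr
    intro x hx
    rw [Finset.mem_range] at hx
    have h1 := col_le0 hD x
    have h2 : hIdx D a l x < RR D a l + CC D a l - (a + l + 1) + (a + l + 1) := by
      unfold hIdx
      omega
    simp only [h2, and_true]
  have himg : ((Finset.range (CC D a l)).filter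
        (fun x => RR D a l + CC D a l - (a + l + 1) ≤ hIdx D a l x)).image (hIdx D a l)
      = Finset.Ico (RR D a l + CC D a l - (a + l + 1)) (RR D a l + CC D a l) := by
    ext j
    simp only [Finset.mem_image, Finset.mem_filter, Finset.mem_range, Finset.mem_Ico]
    constructor
    · rintro ⟨x, ⟨hx, hMx⟩, rfl⟩
      refine ⟨hMx, ?_⟩
      have h1 := col_le0 hD x
      unfold hIdx
      omega
    · rintro ⟨hMj, hjRC⟩
      rcases cover a l hD j hjRC with h | h
      · obtain ⟨x, hx, hxj⟩ := h
        exact ⟨x, ⟨hx, by omega⟩, hxj⟩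
      · obtain ⟨y, hy, hyj⟩ := h
        exfalso
        have h1 := row_le0 hD y
        unfold vIdx at hyj
        omega
  have hcard : ((Finset.range (CC D a l)).filter
        (fun x => RR D a l + CC D a l - (a + l + 1) ≤ hIdx D a l x)).card
      = (Finset.Ico (RR D a l + CC D a l - (a + l + 1)) (RR D a l + CC D a l)).card := by
    rw [← himg, Finset.card_image_of_injOn]
    intro u _ v _ huv
    exact hIdx_injEq a l hD huv
  have hMv : hh D a l (RR D a l + CC D a l - (a + l + 1))
      = ((Finset.range (CC D a l)).filter
        (fun x => RR D a l + CC D a l - (a + l + 1) ≤ hIdx D a l x)).card := by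
    rw [hh, ← hfe]
  rw [hMv, hcard, Nat.card_Ico]
  omega

/-- The crossing-counting lemma. -/
lemma cross (f : ℕ → ℕ) (a : ℕ) (hstep : ∀ i, f (i + 1) ≤ f i + 1 ∧ f i ≤ f (i + 1) + 1)
    (h0 : f 0 ≤ a) : ∀ M : ℕ,
    ((Finset.range M).filter (fun i => f i = a ∧ f (i + 1) = a + 1)).card
      = ((Finset.range M).filter (fun i => f i = a + 1 ∧ f (i + 1) = a)).card
        + (if a < f M then 1 else 0) := by
  intro M
  induction M with
  | zero =>
    simp only [Finset.range_zero, Finset.filter_empty, Finset.card_empty]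
    rw [if_neg (by omega)]
  | succ M ih =>
    rw [Finset.range_add_one, Finset.filter_insert, Finset.filter_insert]
    have hM := hstep M
    by_cases h1 : f M = a ∧ f (M + 1) = a + 1
    · rw [if_pos h1, if_neg (by omega),
        Finset.card_insert_of_notMem (by simp)]
      rw [ih, if_neg (by omega), if_pos (by omega)]
    · rw [if_neg h1]
      by_cases h2 : f M = a + 1 ∧ f (M + 1) = a
      · rw [if_pos h2, Finset.card_insert_of_notMem (by simp)]
        rw [ih, if_pos (by omega), if_neg (by omega)]
      · rw [if_neg h2, ih]
        have : (a < f M) ↔ (a < f (M + 1)) := by omega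
        by_cases h3 : a < f M
        · rw [if_pos h3, if_pos (by omega)]
        · rw [if_neg h3, if_neg (by omega)]

end CHF

open CHF Finset in
theorem complement_hooks_finite (D : Finset (ℕ × ℕ)) (hD : IsYoung D) (a l : ℕ) :
    ({c : ℕ × ℕ | c ∉ D ∧ coArm D c = a ∧ coLeg D c = l}).Finite ∧
    {c : ℕ × ℕ | c ∉ D ∧ coArm D c = a ∧ coLeg D c = l}.ncard
      = (D.filter fun c => arm D c = a ∧ leg D c = l).card + 1 ∧
    {c : ℕ × ℕ | c ∉ D ∧ coArm D c = a ∧ coLeg D c = l}.ncard ≤ D.card + 1 := by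
  classical
  set k := a + l + 1 with hk
  set R := RR D a l with hR
  set C := CC D a l with hC
  set M := R + C - k with hM
  have hRdef : R = col D 0 + k := by rw [hR]; rfl
  have hCdef : C = row D 0 + k := by rw [hC]; rfl
  -- the index sets
  set T' := (Finset.range R).filter (fun y => col D (row D y + a) + l = y) with hT'
  set U' := (Finset.range R).filter
    (fun y => a < row D y ∧ col D (row D y - (a + 1)) = y + l + 1) with hU'
  -- S as a finset
  have hS : {c : ℕ × ℕ | c ∉ D ∧ coArm D c = a ∧ coLeg D c = l}
      = ↑(T'.image (fun y => (row D y + a, y))) := by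
    ext ⟨x, y⟩
    simp only [Set.mem_setOf_eq, Finset.coe_image, Set.mem_image, Finset.mem_coe,
      hT', Finset.mem_filter, Finset.mem_range]
    constructor
    · rintro ⟨hnot, harm, hleg⟩
      have hrow : row D y ≤ x := by
        have := (mem_iff_row hD x y).not.1 hnot
        omega
      have hcol : col D x ≤ y := by
        have h1 : ¬ x < row D y := by omega
        have h2 : ¬ y < col D x := fun h => h1 ((lt_col_iff hD x y).1 h)
        omega
      rw [coArm_eq hD hrow] at harm
      rw [coLeg_eq hD hcol] at hleg
      have hx : x = row D y + a := by omega
      have hy : col D x + l = y := by omega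
      refine ⟨y, ⟨⟨?_, ?_⟩, ?_⟩⟩
      · have := col_le0 hD x
        omega
      · rw [← hx]; exact hy
      · exact Prod.ext hx.symm rfl
    · rintro ⟨y', ⟨hy'R, hy'⟩, heq⟩
      have hx : row D y' + a = x := congrArg Prod.fst heq
      have hyy : y' = y := congrArg Prod.snd heq
      subst hyy
      rw [hx] at hy'
      have hrow : row D y' ≤ x := by omega
      have hcol : col D x ≤ y' := by omega
      refine ⟨?_, ?_, ?_⟩
      · rw [mem_iff_row hD]; omega
      · rw [coArm_eq hD hrow]; omega
      · rw [coLeg_eq hD hcol]; omega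
  -- finiteness
  have hfin : ({c : ℕ × ℕ | c ∉ D ∧ coArm D c = a ∧ coLeg D c = l}).Finite := by
    rw [hS]; exact (T'.image _).finite_toSet
  -- ncard = T'.card
  have hncard : {c : ℕ × ℕ | c ∉ D ∧ coArm D c = a ∧ coLeg D c = l}.ncard = T'.card := by
    rw [hS, Set.ncard_coe_finset, Finset.card_image_of_injOn]
    intro u _ v _ huv
    exact congrArg Prod.snd huv
  -- U = image of U'
  have hU : D.filter (fun c => arm D c = a ∧ leg D c = l)
      = U'.image (fun y => (row D y - (a + 1), y)) := by
    ext ⟨x, y⟩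
    simp only [Finset.mem_filter, Finset.mem_image, hU', Finset.mem_range]
    constructor
    · rintro ⟨hmem, harm, hleg⟩
      rw [arm_eq hD x y] at harm
      rw [leg_eq hD x y] at hleg
      have hxr : x < row D y := (mem_iff_row hD x y).1 hmem
      have hyc : y < col D x := (mem_iff_col hD x y).1 hmem
      have hx : x = row D y - (a + 1) := by omega
      have hcolx : col D x = y + l + 1 := by omega
      refine ⟨y, ⟨⟨?_, by omega, by rw [← hx]; exact hcolx⟩, ?_⟩⟩
      · have := col_le0 hD x
        omega
      · exact Prod.ext hx.symm rfl
    · rintro ⟨y', ⟨⟨hy'R, hay', hcol'⟩, heq⟩⟩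
      have hx : row D y' - (a + 1) = x := congrArg Prod.fst heq
      have hyy : y' = y := congrArg Prod.snd heq
      subst hyy
      rw [hx] at hcol'
      refine ⟨?_, ?_, ?_⟩
      · rw [mem_iff_row hD]; omega
      · rw [arm_eq hD]; omega
      · rw [leg_eq hD]; omega
  -- Up = image of T' under vIdx
  set Up := (Finset.range M).filter
    (fun i => hh D a l i = a ∧ hh D a l (i + 1) = a + 1) with hUp
  set Down := (Finset.range M).filter
    (fun i => hh D a l i = a + 1 ∧ hh D a l (i + 1) = a) with hDown
  have hkRC : k ≤ R + C := by rw [hRdef, hCdef]; omega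
  -- facts for members of T'
  have hT'fact : ∀ y ∈ T', row D y ≤ row D y + a ∧ col D (row D y + a) + l = y ∧ y < R ∧
      hIdx D a l (row D y + a) = vIdx D a l y + k ∧ row D y + a < C := by
    intro y hy
    rw [hT', Finset.mem_filter, Finset.mem_range] at hy
    obtain ⟨hyR, hyc⟩ := hy
    have h1 := col_le0 hD (row D y + a)
    have h2 := row_le0 hD y
    refine ⟨by omega, hyc, hyR, ?_, ?_⟩
    · unfold hIdx vIdx RR
      omega
    · omega
  have hUpT : Up = T'.image (vIdx D a l) := by
    ext i
    rw [hUp, Finset.mem_filter, Finset.mem_range, Finset.mem_image]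
    constructor
    · rintro ⟨hiM, hhi, hhi1⟩
      -- from the step identity get cc i = 0 and cc (i+k) = 1
      have hstepi := step_eq (D := D) a l i
      rw [← hk] at hstepi
      have hci := cc_le_one a l hD i
      have hcik := cc_le_one a l hD (i + k)
      have hcc0 : cc D a l i = 0 := by omega
      have hcc1 : cc D a l (i + k) = 1 := by omega
      -- i is a vIdx
      have hnoh : ¬ ∃ x < CC D a l, hIdx D a l x = i := by
        rintro ⟨x, hx, hxi⟩
        have : x ∈ (Finset.range (CC D a l)).filter (fun x => hIdx D a l x = i) := by
          rw [Finset.mem_filter, Finset.mem_range]; exact ⟨hx, hxi⟩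
        have := Finset.card_pos.2 ⟨x, this⟩
        rw [cc] at hcc0
        omega
      have hiRC : i < RR D a l + CC D a l := by rw [← hR, ← hC]; omega
      rcases cover a l hD i hiRC with h | h
      · exact absurd h hnoh
      obtain ⟨y, hyR, hyi⟩ := h
      -- the x with hIdx x = i + k
      have hex : ∃ x, x ∈ (Finset.range (CC D a l)).filter
          (fun x => hIdx D a l x = i + k) := by
        apply Finset.card_pos.1
        rw [cc] at hcc1
        omega
      obtain ⟨x, hxmem⟩ := hex
      rw [Finset.mem_filter, Finset.mem_range] at hxmem
      obtain ⟨hxC, hxik⟩ := hxmem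
      have hrowle : row D y ≤ x := by
        have := (vIdx_lt_hIdx_iff a l hD x y hyR).1 (by omega)
        exact this
      -- compute hh i
      have hhival : hh D a l i = x - row D y := by
        rw [hh, ← hk]
        refine card_filter_Ico _ (le_of_lt hxC) (fun x' hx' => ?_)
        have e1 := hIdx_lt_vIdx_iff a l hD x' y hyR
        have e2 := hIdx_lt_iff a l hD x' x
        omega
      have hxval : x = row D y + a := by omega
      -- derive the T' condition
      have hcolxy : col D x ≤ y := by
        have h1 : ¬ x < row D y := by omega
        have h2 : ¬ y < col D x := fun h => h1 ((lt_col_iff hD x y).1 h)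
        omega
      have hcolx : col D x + l = y := by
        have hcx0 := col_le0 hD x
        have hcomb : hIdx D a l x = vIdx D a l y + k := by omega
        unfold hIdx vIdx at hcomb
        omega
      refine ⟨y, ?_, hyi⟩
      rw [hT', Finset.mem_filter, Finset.mem_range]
      exact ⟨hyR, by rw [← hxval]; exact hcolx⟩
    · rintro ⟨y, hyT, rfl⟩
      obtain ⟨hrle, hyc, hyR, hidx, hxC⟩ := hT'fact y hyT
      set x := row D y + a with hxdef
      have hiM : vIdx D a l y < M := by
        have h1 := col_le0 hD x
        have : hIdx D a l x ≤ R + C - 1 := by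
          unfold hIdx
          rw [← hR]
          have : RR D a l - col D x ≤ R := by rw [← hR]; omega
          omega
        omega
      refine ⟨hiM, ?_, ?_⟩
      · rw [hh, ← hk]
        have := card_filter_Ico (C := CC D a l) (b1 := row D y) (b2 := x)
          (fun x' => vIdx D a l y ≤ hIdx D a l x' ∧ hIdx D a l x' < vIdx D a l y + k)
          (by rw [← hC] at *; omega)
          (fun x' hx' => by
            have e1 := hIdx_lt_vIdx_iff a l hD x' y hyR
            have e2 := hIdx_lt_iff a l hD x' x
            omega)
        rw [this]
        omega
      · rw [hh, ← hk]
        have := card_filter_Ico (C := CC D a l) (b1 := row D y) (b2 := x + 1)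
          (fun x' => vIdx D a l y + 1 ≤ hIdx D a l x' ∧ hIdx D a l x' < vIdx D a l y + 1 + k)
          (by rw [← hC] at *; omega)
          (fun x' hx' => by
            have e1 := hIdx_lt_vIdx_iff a l hD x' y hyR
            have e2 := vIdx_lt_hIdx_iff a l hD x' y hyR
            have e3 := hIdx_lt_iff a l hD x' x
            have e4 := hIdx_lt_iff a l hD x x'
            omega)
        rw [this]
        omega
  -- facts for members of U'
  have hU'fact : ∀ y ∈ U', a < row D y ∧ col D (row D y - (a + 1)) = y + l + 1 ∧ y < R ∧
      hIdx D a l (row D y - (a + 1)) + k = vIdx D a l y := by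
    intro y hy
    rw [hU', Finset.mem_filter, Finset.mem_range] at hy
    obtain ⟨hyR, hay, hyc⟩ := hy
    have h1 := col_le0 hD (row D y - (a + 1))
    refine ⟨hay, hyc, hyR, ?_⟩
    unfold hIdx vIdx
    omega
  have hDownU : Down = U'.image (fun y => hIdx D a l (row D y - (a + 1))) := by
    ext i
    rw [hDown, Finset.mem_filter, Finset.mem_range, Finset.mem_image]
    constructor
    · rintro ⟨hiM, hhi, hhi1⟩
      have hstepi := step_eq (D := D) a l i
      rw [← hk] at hstepi
      have hci := cc_le_one a l hD i
      have hcik := cc_le_one a l hD (i + k)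
      have hcc1 : cc D a l i = 1 := by omega
      have hcc0 : cc D a l (i + k) = 0 := by omega
      -- i is an hIdx
      have hex : ∃ x, x ∈ (Finset.range (CC D a l)).filter
          (fun x => hIdx D a l x = i) := by
        apply Finset.card_pos.1
        rw [cc] at hcc1
        omega
      obtain ⟨x, hxmem⟩ := hex
      rw [Finset.mem_filter, Finset.mem_range] at hxmem
      obtain ⟨hxC, hxi⟩ := hxmem
      -- i + k is a vIdx
      have hnoh : ¬ ∃ x' < CC D a l, hIdx D a l x' = i + k := by
        rintro ⟨x', hx', hx'i⟩
        have : x' ∈ (Finset.range (CC D a l)).filter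
            (fun x => hIdx D a l x = i + k) := by
          rw [Finset.mem_filter, Finset.mem_range]; exact ⟨hx', hx'i⟩
        have := Finset.card_pos.2 ⟨x', this⟩
        rw [cc] at hcc0
        omega
      have hikRC : i + k < RR D a l + CC D a l := by rw [← hR, ← hC]; omega
      rcases cover a l hD (i + k) hikRC with h | h
      · exact absurd h hnoh
      obtain ⟨y, hyR, hyik⟩ := h
      have hxlt : x < row D y := by
        have := (hIdx_lt_vIdx_iff a l hD x y hyR).1 (by omega)
        exact this
      have hrowyC : row D y ≤ C := by
        have := row_le0 hD y
        rw [hCdef]; omega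
      have hhival : hh D a l i = row D y - x := by
        rw [hh, ← hk]
        refine card_filter_Ico (b1 := x) (b2 := row D y) _ (by rw [← hC]; exact hrowyC)
          (fun x' hx' => ?_)
        have e1 := hIdx_lt_vIdx_iff a l hD x' y hyR
        have e2 := hIdx_lt_iff a l hD x' x
        have e3 := hIdx_lt_iff a l hD x x'
        omega
      have hxval : x = row D y - (a + 1) := by omega
      have haltrow : a < row D y := by omega
      have hycx : y < col D x := (lt_col_iff hD x y).2 hxlt
      have hcolx : col D x = y + l + 1 := by
        have hcx0 := col_le0 hD x
        have hcomb : hIdx D a l x + k = vIdx D a l y := by omega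
        unfold hIdx vIdx at hcomb
        omega
      refine ⟨y, ?_, ?_⟩
      · rw [hU', Finset.mem_filter, Finset.mem_range]
        exact ⟨hyR, haltrow, by rw [← hxval]; exact hcolx⟩
      · rw [← hxval]; exact hxi
    · rintro ⟨y, hyU, rfl⟩
      obtain ⟨hay, hyc, hyR, hidx⟩ := hU'fact y hyU
      set x := row D y - (a + 1) with hxdef
      have hrowyC : row D y ≤ C := by
        have := row_le0 hD y
        rw [hCdef]; omega
      have hxC : x < C := by omega
      have hiM : hIdx D a l x < M := by
        have h2 := row_le0 hD y
        have h3 : vIdx D a l y ≤ RR D a l - 1 + row D 0 := by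
          unfold vIdx
          omega
        omega
      refine ⟨hiM, ?_, ?_⟩
      · rw [hh, ← hk]
        have := card_filter_Ico (C := CC D a l) (b1 := x) (b2 := row D y)
          (fun x' => hIdx D a l x ≤ hIdx D a l x' ∧ hIdx D a l x' < hIdx D a l x + k)
          (by rw [← hC]; exact hrowyC)
          (fun x' hx' => by
            have e1 := hIdx_lt_vIdx_iff a l hD x' y hyR
            have e2 := hIdx_lt_iff a l hD x' x
            have e3 := hIdx_lt_iff a l hD x x'
            omega)
        rw [this]
        omega
      · rw [hh, ← hk]
        have := card_filter_Ico (C := CC D a l) (b1 := x + 1) (b2 := row D y)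
          (fun x' => hIdx D a l x + 1 ≤ hIdx D a l x' ∧ hIdx D a l x' < hIdx D a l x + 1 + k)
          (by rw [← hC]; exact hrowyC)
          (fun x' hx' => by
            have e1 := hIdx_lt_vIdx_iff a l hD x' y hyR
            have e2 := vIdx_lt_hIdx_iff a l hD x' y hyR
            have e3 := hIdx_lt_iff a l hD x' x
            have e4 := hIdx_lt_iff a l hD x x'
            omega)
        rw [this]
        omega
  -- card computations
  have hUpcard : Up.card = T'.card := by
    rw [hUpT, Finset.card_image_of_injOn]
    intro u hu v hv huv
    simp only [Finset.mem_coe] at hu hv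
    obtain ⟨_, _, huR, _, _⟩ := hT'fact u hu
    obtain ⟨_, _, hvR, _, _⟩ := hT'fact v hv
    by_contra hne
    rcases Nat.lt_trichotomy u v with h1 | h1 | h1
    · have := vIdx_anti a l hD h1 (by rw [← hR]; exact hvR); omega
    · exact hne h1
    · have := vIdx_anti a l hD h1 (by rw [← hR]; exact huR); omega
  have hDowncard : Down.card = U'.card := by
    rw [hDownU, Finset.card_image_of_injOn]
    intro u hu v hv huv
    simp only [Finset.mem_coe] at hu hv
    obtain ⟨_, _, huR, hui⟩ := hU'fact u hu
    obtain ⟨_, _, hvR, hvi⟩ := hU'fact v hv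
    have huv' : hIdx D a l (row D u - (a + 1)) = hIdx D a l (row D v - (a + 1)) := huv
    have hvv : vIdx D a l u = vIdx D a l v := by omega
    by_contra hne
    rcases Nat.lt_trichotomy u v with h1 | h1 | h1
    · have := vIdx_anti a l hD h1 (by rw [← hR]; exact hvR); omega
    · exact hne h1
    · have := vIdx_anti a l hD h1 (by rw [← hR]; exact huR); omega
  have hUcard : (D.filter fun c => arm D c = a ∧ leg D c = l).card = U'.card := by
    rw [hU, Finset.card_image_of_injOn]
    intro u _ v _ huv
    exact congrArg Prod.snd huv
  -- the crossing count
  have hstep : ∀ i, hh D a l (i + 1) ≤ hh D a l i + 1 ∧ hh D a l i ≤ hh D a l (i + 1) + 1 := by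
    intro i
    have h1 := step_eq (D := D) a l i
    have h2 := cc_le_one a l hD i
    have h3 := cc_le_one a l hD (i + (a + l + 1))
    omega
  have hcross := cross (hh D a l) a hstep (by rw [hh_zero a l hD]; omega) M
  have hlast : hh D a l M = k := by
    rw [hM, hR, hC, hk]
    exact hh_last a l hD
  rw [hlast, if_pos (by omega)] at hcross
  rw [← hUp, ← hDown] at hcross
  have hmain : {c : ℕ × ℕ | c ∉ D ∧ coArm D c = a ∧ coLeg D c = l}.ncard
      = (D.filter fun c => arm D c = a ∧ leg D c = l).card + 1 := by
    rw [hncard, hUcard, ← hUpcard, ← hDowncard]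
    exact hcross
  refine ⟨hfin, hmain, ?_⟩
  rw [hmain]
  have := Finset.card_filter_le D (fun c => arm D c = a ∧ leg D c = l)
  omega
end

section
/- Let D be a Young diagram and let p, q be coprime positive integers with p + q > |D|. Then for every box c \in D, one has l(c)/(a(c)+1) \neq q/p and (l(c)+1)/a(c) \neq q/p; equivalently, p \cdot l(c) \neq q \cdot (a(c)+1) and p \cdot (l(c)+1) \neq q \cdot a(c). -/
/-!
A box `c` satisfying either slope equality gives a solution of `p * l = q * m` with `m > 0`, where
`l + m = a(c) + l(c) + 1` is the hook length of `c`. Coprimality forces `(l, m) = k • (q, p)` with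
`k ≥ 1`, so the hook length is at least `p + q`, while the hook of `c` lies inside `D`.
-/

theorem Nat.Coprime.add_le_add_of_mul_eq {p q l m : ℕ} (hpq : p.Coprime q)
    (h : p * l = q * m) (hm : 0 < m) : p + q ≤ l + m := by
  obtain ⟨k, rfl⟩ : p ∣ m := hpq.dvd_of_dvd_mul_left ⟨l, by rw [h, mul_comm]⟩
  have hp : 0 < p := Nat.pos_of_mul_pos_right hm
  have hk : 1 ≤ k := Nat.pos_of_mul_pos_left hm
  have hl : l = q * k := Nat.eq_of_mul_eq_mul_left hp (by rw [h]; ring)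
  calc p + q ≤ (p + q) * k := Nat.le_mul_of_pos_right _ hk
    _ = l + p * k := by rw [hl]; ring

theorem arm_add_leg_add_one_le_card {D : Finset (ℕ × ℕ)} {c : ℕ × ℕ} (hc : c ∈ D) :
    arm D c + leg D c + 1 ≤ D.card := by
  set A := D.filter fun d => d.2 = c.2 ∧ c.1 < d.1
  set L := D.filter fun d => d.1 = c.1 ∧ c.2 < d.2
  have hAL : Disjoint A L := by
    rw [Finset.disjoint_left]
    intro d hdA hdL
    simp only [A, L, Finset.mem_filter] at hdA hdL
    omega
  have hc' : c ∉ A ∪ L := by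
    simp [A, L]
  have hsub : insert c (A ∪ L) ⊆ D :=
    Finset.insert_subset hc <|
      Finset.union_subset (Finset.filter_subset _ _) (Finset.filter_subset _ _)
  calc arm D c + leg D c + 1 = (insert c (A ∪ L)).card := by
        rw [Finset.card_insert_of_notMem hc', Finset.card_union_of_disjoint hAL]; rfl
    _ ≤ D.card := Finset.card_le_card hsub

theorem no_slope_equalities_general (D : Finset (ℕ × ℕ))
    (p q : ℕ) (hpq : Nat.Coprime p q)
    (hn : D.card < p + q) :
    ∀ c ∈ D, p * leg D c ≠ q * (arm D c + 1) ∧ p * (leg D c + 1) ≠ q * arm D c := by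
  intro c hc
  have hhook := arm_add_leg_add_one_le_card hc
  refine ⟨fun h => ?_, fun h => ?_⟩
  · have := hpq.add_le_add_of_mul_eq h (Nat.succ_pos _)
    omega
  · have := hpq.symm.add_le_add_of_mul_eq h.symm (Nat.succ_pos _)
    omega

theorem no_slope_equalities (D : Finset (ℕ × ℕ)) (hD : IsYoung D)
    (p q : ℕ) (hp : 0 < p) (hq : 0 < q) (hpq : Nat.Coprime p q)
    (hn : D.card < p + q) :
    ∀ c ∈ D, p * leg D c ≠ q * (arm D c + 1) ∧ p * (leg D c + 1) ≠ q * arm D c :=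
  no_slope_equalities_general D p q hpq hn
end

section
/- For coprime positive integers p, q and any integer n \geq p + q, there exists a Young diagram D with |D| = n and a box c \in D such that p \cdot l(c) = q \cdot (a(c) + 1). -/
/-!
Write `n - (p + q) = k p + r` with `r < p`. Stack a column of `q` boxes on the first column of
the `p × (k + 1)` rectangle and put `r` more boxes in the row just above the rectangle, right of
that column. This is a Young diagram with `n` boxes, and the box `(0, k)` at the top of the
rectangle's first column has arm `p - 1` and leg `q`.
-/

open Finset

theorem arm_eq_of_mem_row_iff {D : Finset (ℕ × ℕ)} {x y L : ℕ}
    (hrow : ∀ x', (x', y) ∈ D ↔ x' < L) : arm D (x, y) = L - x - 1 := by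
  have : D.filter (fun d => d.2 = y ∧ x < d.1) = Ioo x L ×ˢ {y} := by
    ext ⟨x', y'⟩
    simp only [mem_filter, mem_product, mem_Ioo, mem_singleton]
    constructor
    · rintro ⟨hd, rfl, hx⟩
      exact ⟨⟨hx, (hrow x').1 hd⟩, rfl⟩
    · rintro ⟨⟨hx, hL⟩, rfl⟩
      exact ⟨(hrow x').2 hL, rfl, hx⟩
  rw [arm, this, card_product, Nat.card_Ioo, card_singleton, mul_one]

theorem leg_eq_of_mem_col_iff {D : Finset (ℕ × ℕ)} {x y L : ℕ}
    (hcol : ∀ y', (x, y') ∈ D ↔ y' < L) : leg D (x, y) = L - y - 1 := by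
  have : D.filter (fun d => d.1 = x ∧ y < d.2) = {x} ×ˢ Ioo y L := by
    ext ⟨x', y'⟩
    simp only [mem_filter, mem_product, mem_Ioo, mem_singleton]
    constructor
    · rintro ⟨hd, rfl, hy⟩
      exact ⟨rfl, hy, (hcol y').1 hd⟩
    · rintro ⟨rfl, hy, hL⟩
      exact ⟨(hcol y').2 hL, rfl, hy⟩
  rw [leg, this, card_product, Nat.card_Ioo, card_singleton, one_mul]

def slopeDiagram (p q k r : ℕ) : Finset (ℕ × ℕ) :=
  (range p ×ˢ range (k + 1)) ∪ ({0} ×ˢ Ico (k + 1) (k + q + 1)) ∪ (Ioc 0 r ×ˢ {k + 1})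

section slopeDiagram

variable {p q k r : ℕ}

theorem mem_slopeDiagram {d : ℕ × ℕ} :
    d ∈ slopeDiagram p q k r ↔ d.1 < p ∧ d.2 ≤ k ∨ d.1 = 0 ∧ k < d.2 ∧ d.2 ≤ k + q ∨
      0 < d.1 ∧ d.1 ≤ r ∧ d.2 = k + 1 := by
  simp only [slopeDiagram, mem_union, mem_product, mem_range, mem_Ico, mem_Ioc, mem_singleton]
  omega

theorem isYoung_slopeDiagram (hq : 0 < q) (hr : r < p) : IsYoung (slopeDiagram p q k r) := by
  intro x y x' y' hxy hx hy
  rw [mem_slopeDiagram] at hxy ⊢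
  omega

theorem card_slopeDiagram : #(slopeDiagram p q k r) = p * (k + 1) + q + r := by
  have hdisj₁ : Disjoint (range p ×ˢ range (k + 1)) ({0} ×ˢ Ico (k + 1) (k + q + 1)) :=
    disjoint_product.2 (Or.inr (disjoint_left.2 fun y hy hy' => by
      rw [mem_range] at hy; rw [mem_Ico] at hy'; omega))
  have hdisj₂ : Disjoint ((range p ×ˢ range (k + 1)) ∪ ({0} ×ˢ Ico (k + 1) (k + q + 1)))
      (Ioc 0 r ×ˢ {k + 1}) :=
    disjoint_left.2 fun d hd hd' => by
      simp only [mem_union, mem_product, mem_range, mem_Ico, mem_Ioc, mem_singleton] at hd hd'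
      omega
  rw [slopeDiagram, card_union_of_disjoint hdisj₂, card_union_of_disjoint hdisj₁]
  simp

theorem arm_slopeDiagram : arm (slopeDiagram p q k r) (0, k) = p - 1 :=
  arm_eq_of_mem_row_iff fun x' => by rw [mem_slopeDiagram]; omega

theorem leg_slopeDiagram (hp : 0 < p) : leg (slopeDiagram p q k r) (0, k) = q := by
  have hcol : ∀ y', (0, y') ∈ slopeDiagram p q k r ↔ y' < k + q + 1 := fun y' => by
    rw [mem_slopeDiagram]; omega
  rw [leg_eq_of_mem_col_iff hcol]
  omega

end slopeDiagram

theorem exists_diagram_with_slope_plus_general (p q n : ℕ) (hp : 0 < p) (hq : 0 < q)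
    (hn : p + q ≤ n) :
    ∃ D : Finset (ℕ × ℕ), IsYoung D ∧ D.card = n ∧
      ∃ c ∈ D, p * leg D c = q * (arm D c + 1) := by
  set m := n - (p + q)
  refine ⟨slopeDiagram p q (m / p) (m % p), isYoung_slopeDiagram hq (Nat.mod_lt m hp), ?_,
    (0, m / p), mem_slopeDiagram.2 (Or.inl ⟨hp, le_rfl⟩), ?_⟩
  · have hdiv := Nat.div_add_mod m p
    rw [card_slopeDiagram, Nat.mul_succ]
    omega
  · rw [arm_slopeDiagram, leg_slopeDiagram hp, Nat.sub_add_cancel hp, mul_comm]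

theorem exists_diagram_with_slope_plus (p q n : ℕ) (hp : 0 < p) (hq : 0 < q)
    (hpq : Nat.Coprime p q) (hn : p + q ≤ n) :
    ∃ D : Finset (ℕ × ℕ), IsYoung D ∧ D.card = n ∧
      ∃ c ∈ D, p * leg D c = q * (arm D c + 1) :=
  exists_diagram_with_slope_plus_general p q n hp hq hn
end

section
/- For coprime positive integers p, q and any integer n \geq p + q, there exists a Young diagram D with |D| = n and a box c \in D such that p \cdot (l(c) + 1) = q \cdot a(c). -/
/-!
The box is chosen with arm `p` and leg `q - 1`. If the `k` columns of a diagram have heights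
`a, b, 1, 1, …` with `a ≥ b ≥ 1`, the bottom box of the first column has leg `a - 1` and arm
`k - 1`, that of the second column leg `b - 1` and arm `k - 2`. Write `n = p + q + s`. If `s < q`,
take heights `q, s + 1, 1, …` on `p + 1` columns and the box `(0, 0)`; otherwise take heights
`s, q, 1, …` on `p + 2` columns and the box `(1, 0)`.
-/

open Finset

def columnDiagram (k : ℕ) (h : ℕ → ℕ) : Finset (ℕ × ℕ) :=
  (range k).biUnion fun x => {x} ×ˢ range (h x)

namespace columnDiagram

variable {k : ℕ} {h : ℕ → ℕ}

@[simp]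
lemma mem_iff {x y : ℕ} : (x, y) ∈ columnDiagram k h ↔ x < k ∧ y < h x := by
  simp [columnDiagram]

lemma isYoung (hh : Antitone h) : IsYoung (columnDiagram k h) := by
  intro x y x' y' hxy hx hy
  rw [mem_iff] at hxy ⊢
  exact ⟨hx.trans_lt hxy.1, hy.trans_lt (hxy.2.trans_le (hh hx))⟩

lemma card_eq_sum : (columnDiagram k h).card = ∑ x ∈ range k, h x := by
  rw [columnDiagram, card_biUnion]
  · simp
  · intro a _ b _ hab
    simp only [disjoint_left, mem_product, mem_singleton]
    exact fun c hca hcb => hab (hca.1.symm.trans hcb.1)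

lemma arm_bottom (hh : ∀ x < k, 0 < h x) (j : ℕ) :
    arm (columnDiagram k h) (j, 0) = k - 1 - j := by
  have : (columnDiagram k h).filter (fun d => d.2 = 0 ∧ j < d.1) =
      (Ico (j + 1) k).image fun x => (x, 0) := by
    ext ⟨x, y⟩
    simp only [mem_filter, mem_iff, mem_image, mem_Ico, Prod.mk.injEq]
    constructor
    · rintro ⟨⟨hx, -⟩, rfl, hjx⟩
      exact ⟨x, ⟨hjx, hx⟩, rfl, rfl⟩
    · rintro ⟨x, ⟨hjx, hx⟩, rfl, rfl⟩
      exact ⟨⟨hx, hh x hx⟩, rfl, hjx⟩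
  rw [arm, this, card_image_of_injective _ (Prod.mk_left_injective 0), Nat.card_Ico]
  omega

lemma leg_bottom {j : ℕ} (hj : j < k) : leg (columnDiagram k h) (j, 0) = h j - 1 := by
  have : (columnDiagram k h).filter (fun d => d.1 = j ∧ 0 < d.2) =
      (Ico 1 (h j)).image (Prod.mk j) := by
    ext ⟨x, y⟩
    simp only [mem_filter, mem_iff, mem_image, mem_Ico, Prod.mk.injEq]
    constructor
    · rintro ⟨⟨-, hy⟩, rfl, hy0⟩
      exact ⟨y, ⟨hy0, hy⟩, rfl, rfl⟩
    · rintro ⟨y, ⟨hy0, hy⟩, rfl, rfl⟩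
      exact ⟨⟨hj, hy⟩, rfl, hy0⟩
  rw [leg, this, card_image_of_injective _ (Prod.mk_right_injective j), Nat.card_Ico]

end columnDiagram

def twoTallColumns (a b : ℕ) : ℕ → ℕ
  | 0 => a
  | 1 => b
  | _ + 2 => 1

lemma twoTallColumns_pos {a b : ℕ} (ha : 0 < a) (hb : 0 < b) (x : ℕ) :
    0 < twoTallColumns a b x := by
  rcases x with _ | _ | x <;> simp [twoTallColumns, ha, hb]

lemma twoTallColumns_antitone {a b : ℕ} (hab : b ≤ a) (hb : 0 < b) :
    Antitone (twoTallColumns a b) := by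
  intro x y hxy
  rcases x with _ | _ | x <;> rcases y with _ | _ | y <;> simp [twoTallColumns] <;> omega

lemma sum_twoTallColumns (a b : ℕ) {k : ℕ} (hk : 2 ≤ k) :
    ∑ x ∈ range k, twoTallColumns a b x = a + b + (k - 2) := by
  obtain ⟨m, rfl⟩ := Nat.exists_eq_add_of_le' hk
  simp [sum_range_succ', twoTallColumns]
  omega

open columnDiagram in
theorem exists_diagram_with_slope_minus_general (p q n : ℕ) (hp : 0 < p) (hq : 0 < q)
    (hn : p + q ≤ n) :
    ∃ D : Finset (ℕ × ℕ), IsYoung D ∧ D.card = n ∧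
      ∃ c ∈ D, p * (leg D c + 1) = q * arm D c := by
  obtain ⟨s, rfl⟩ := Nat.exists_eq_add_of_le hn
  rcases Nat.lt_or_ge s q with hsq | hqs
  · refine ⟨columnDiagram (p + 1) (twoTallColumns q (s + 1)),
      isYoung (twoTallColumns_antitone hsq s.succ_pos), ?_, (0, 0),
      mem_iff.2 ⟨p.succ_pos, hq⟩, ?_⟩
    · rw [card_eq_sum, sum_twoTallColumns _ _ (by omega)]
      omega
    · rw [leg_bottom p.succ_pos, arm_bottom fun x _ => twoTallColumns_pos hq s.succ_pos x]
      simp only [twoTallColumns]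
      rw [Nat.sub_add_cancel hq, Nat.mul_comm]
      simp
  · refine ⟨columnDiagram (p + 2) (twoTallColumns s q),
      isYoung (twoTallColumns_antitone hqs hq), ?_, (1, 0), mem_iff.2 ⟨by omega, hq⟩, ?_⟩
    · rw [card_eq_sum, sum_twoTallColumns _ _ (by omega)]
      omega
    · rw [leg_bottom (by omega), arm_bottom fun x _ => twoTallColumns_pos (by omega) hq x]
      simp only [twoTallColumns]
      rw [Nat.sub_add_cancel hq, Nat.mul_comm]
      simp

theorem exists_diagram_with_slope_minus (p q n : ℕ) (hp : 0 < p) (hq : 0 < q)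
    (hpq : Nat.Coprime p q) (hn : p + q ≤ n) :
    ∃ D : Finset (ℕ × ℕ), IsYoung D ∧ D.card = n ∧
      ∃ c ∈ D, p * (leg D c + 1) = q * arm D c :=
  exists_diagram_with_slope_minus_general p q n hp hq hn
end

section
/- Let D be a Young diagram, p, q coprime positive integers, K a positive integer, P = Kp, Q = Kq, such that every box (x,y) of D satisfies qx + py \leq Kpq - p - q. Fix non-negative integers a, l with l/(a+1) \geq q/p (i.e., p·l \geq q·(a+1)). If (a, Q-1-l) \in D, then the number of boxes c \in D with a(c) = a and l(c) = l equals the number of boxes in R_{P,Q} \ D with arm a and leg l, where R_{P,Q} = {0,...,P-1} \times {0,...,Q-1}. -/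
/-!
Walk along the boundary of `D` inside the rectangle `[0, P) × [0, Q)` from `(0, Q)` to `(P, 0)`: it
consists of `P` east steps, one per column, and `Q` south steps, one per row. A box of `D` with arm
`a` and leg `l` is the same thing as an east step followed `m = a + l + 1` steps later by a south
step, where the window of `m` steps starting at the east step contains `a + 1` east steps; a box of
the complement with arm `a` and leg `l` is a south step followed `m` steps later by an east step,
with `a` east steps in the window. So the two sides count the down- and the up-crossings of the
level `a` by the window count `i ↦ #(east steps among steps i, …, i + m - 1)`. The box
`(a, Q - 1 - l)` of `D` makes the first window contain more than `a` east steps, and the slope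
condition, which puts `(P - a - 1, l)` above the diagonal and hence outside `D`, does the same for
the last window; so the crossings pair up.
-/

open Finset

theorem card_downCrossings_add_ite {α : Type*} [LinearOrder α] (f : ℕ → α) (b : α) (T : ℕ) :
    #{i ∈ range T | b < f i ∧ f (i + 1) ≤ b} + (if b < f T then 1 else 0)
      = #{i ∈ range T | f i ≤ b ∧ b < f (i + 1)} + (if b < f 0 then 1 else 0) := by
  induction T with
  | zero => simp
  | succ T ih =>
    rw [range_add_one, filter_insert, filter_insert]
    rcases lt_or_ge b (f T) with h₀ | h₀ <;> rcases lt_or_ge b (f (T + 1)) with h₁ | h₁ <;>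
      simp [h₀, h₁, not_lt.mpr, not_le.mpr, card_insert_of_notMem] at ih ⊢ <;> omega

theorem card_downCrossings_eq_card_upCrossings {α : Type*} [LinearOrder α] {f : ℕ → α} {b : α}
    {T : ℕ} (h₀ : b < f 0) (hT : b < f T) :
    #{i ∈ range T | b < f i ∧ f (i + 1) ≤ b} = #{i ∈ range T | f i ≤ b ∧ b < f (i + 1)} := by
  simpa [h₀, hT] using card_downCrossings_add_ite f b T

/-- `IsYoung D` as a Mathlib `YoungDiagram`. Mathlib indexes cells as (row, column), so for our
`(x, y)` its `rowLen x` is the height of column `x` and its `colLen y` the length of row `y`. -/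
def IsYoung.toYoungDiagram {D : Finset (ℕ × ℕ)} (hD : IsYoung D) : YoungDiagram where
  cells := D
  isLowerSet := fun c d hdc hc => hD c.1 c.2 d.1 d.2 hc hdc.1 hdc.2

namespace YoungDiagram

variable {μ : YoungDiagram} {P Q x y i a l : ℕ}

theorem arm_add_add_one (h : (x, y) ∈ μ) : arm μ.cells (x, y) + x + 1 = μ.colLen y := by
  have hrow : μ.cells.filter (fun d => d.2 = y ∧ x < d.1) = Ioo x (μ.colLen y) ×ˢ {y} := by
    ext ⟨i, j⟩
    simp only [mem_filter, mem_cells, mem_product, mem_Ioo, mem_singleton]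
    constructor
    · rintro ⟨hij, rfl, hxi⟩
      exact ⟨⟨hxi, mem_iff_lt_colLen.mp hij⟩, rfl⟩
    · rintro ⟨⟨hxi, hi⟩, rfl⟩
      exact ⟨mem_iff_lt_colLen.mpr hi, rfl, hxi⟩
  have := mem_iff_lt_colLen.mp h
  rw [arm, hrow, card_product, card_singleton, Nat.card_Ioo]
  omega

theorem leg_add_add_one (h : (x, y) ∈ μ) : leg μ.cells (x, y) + y + 1 = μ.rowLen x := by
  have hcol : μ.cells.filter (fun d => d.1 = x ∧ y < d.2) = {x} ×ˢ Ioo y (μ.rowLen x) := by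
    ext ⟨i, j⟩
    simp only [mem_filter, mem_cells, mem_product, mem_Ioo, mem_singleton]
    constructor
    · rintro ⟨hij, rfl, hyj⟩
      exact ⟨rfl, hyj, mem_iff_lt_rowLen.mp hij⟩
    · rintro ⟨rfl, hyj, hj⟩
      exact ⟨mem_iff_lt_rowLen.mpr hj, rfl, hyj⟩
  have := mem_iff_lt_rowLen.mp h
  rw [leg, hcol, card_product, card_singleton, Nat.card_Ioo]
  omega

theorem coArm_add_colLen (h : (x, y) ∉ μ) : coArm μ.cells (x, y) + μ.colLen y = x := by
  have hx : μ.colLen y ≤ x := not_lt.mp (mt mem_iff_lt_colLen.mpr h)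
  have : (range x).filter (fun i => (i, y) ∉ μ.cells) = Ico (μ.colLen y) x := by
    ext i
    simp only [mem_filter, mem_range, mem_Ico, mem_cells, mem_iff_lt_colLen]
    omega
  rw [coArm, this, Nat.card_Ico]
  omega

theorem coLeg_add_rowLen (h : (x, y) ∉ μ) : coLeg μ.cells (x, y) + μ.rowLen x = y := by
  have hy : μ.rowLen x ≤ y := not_lt.mp (mt mem_iff_lt_rowLen.mpr h)
  have : (range y).filter (fun j => (x, j) ∉ μ.cells) = Ico (μ.rowLen x) y := by
    ext j
    simp only [mem_filter, mem_range, mem_Ico, mem_cells, mem_iff_lt_rowLen]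
    omega
  rw [coLeg, this, Nat.card_Ico]
  omega

/-- The boundary of `μ` inside `[0, P) × [0, Q)`, walked from `(0, Q)` to `(P, 0)`, is a path of
`P + Q` unit steps, numbered from `0`. The east step on top of column `x` is preceded by the `x`
east steps of earlier columns and by `Q - μ.rowLen x` south steps; the south step at the end of
row `y` by `Q - 1 - y` south steps and by `μ.colLen y` east steps. -/
def eastIdx (μ : YoungDiagram) (Q x : ℕ) : ℕ := x + (Q - μ.rowLen x)

def southIdx (μ : YoungDiagram) (Q y : ℕ) : ℕ := Q - 1 - y + μ.colLen y

def eastCount (μ : YoungDiagram) (P Q i : ℕ) : ℕ := #{x ∈ range P | μ.eastIdx Q x < i}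

theorem rowLen_le (hQ : ∀ c ∈ μ, c.2 < Q) (x : ℕ) : μ.rowLen x ≤ Q :=
  not_lt.mp fun h => (hQ _ (mem_iff_lt_rowLen.mpr h)).false

theorem colLen_le (hP : ∀ c ∈ μ, c.1 < P) (y : ℕ) : μ.colLen y ≤ P :=
  not_lt.mp fun h => (hP _ (mem_iff_lt_colLen.mpr h)).false

theorem eastIdx_strictMono : StrictMono (μ.eastIdx Q) :=
  strictMono_nat_of_lt_succ fun x => by
    have := μ.rowLen_anti x (x + 1) x.le_succ
    unfold eastIdx
    omega

theorem southIdx_strictAntiOn : StrictAntiOn (μ.southIdx Q) (Set.Iio Q) := by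
  intro y _ y' hy' hyy'
  have := μ.colLen_anti y y' hyy'.le
  simp only [Set.mem_Iio] at hy'
  unfold southIdx
  omega

theorem southIdx_eq_eastIdx_add (hQ : ∀ c ∈ μ, c.2 < Q) (h : (x, y) ∈ μ) :
    μ.southIdx Q y = μ.eastIdx Q x + (arm μ.cells (x, y) + leg μ.cells (x, y) + 1) := by
  have := arm_add_add_one h
  have := leg_add_add_one h
  have := rowLen_le hQ x
  unfold southIdx eastIdx
  omega

theorem eastIdx_eq_southIdx_add (hy : y < Q) (h : (x, y) ∉ μ) :
    μ.eastIdx Q x = μ.southIdx Q y + (coArm μ.cells (x, y) + coLeg μ.cells (x, y) + 1) := by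
  have := coArm_add_colLen h
  have := coLeg_add_rowLen h
  unfold southIdx eastIdx
  omega

theorem eastIdx_lt_southIdx_iff (hQ : ∀ c ∈ μ, c.2 < Q) (hy : y < Q) :
    μ.eastIdx Q x < μ.southIdx Q y ↔ (x, y) ∈ μ := by
  by_cases h : (x, y) ∈ μ
  · simp only [h, iff_true, southIdx_eq_eastIdx_add hQ h]
    omega
  · simp only [h, iff_false, eastIdx_eq_southIdx_add hy h]
    omega

theorem eastIdx_ne_southIdx (hQ : ∀ c ∈ μ, c.2 < Q) (hy : y < Q) :
    μ.eastIdx Q x ≠ μ.southIdx Q y := by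
  by_cases h : (x, y) ∈ μ
  · rw [southIdx_eq_eastIdx_add hQ h]
    omega
  · rw [eastIdx_eq_southIdx_add hy h]
    omega

theorem eastIdx_lt (hx : x < P) : μ.eastIdx Q x < P + Q := by
  unfold eastIdx
  omega

theorem southIdx_lt (hP : ∀ c ∈ μ, c.1 < P) (hy : y < Q) : μ.southIdx Q y < P + Q := by
  have := colLen_le hP y
  unfold southIdx
  omega

theorem exists_eastIdx_or_southIdx (hμ : ∀ c ∈ μ, c.1 < P ∧ c.2 < Q) (hi : i < P + Q) :
    (∃ x < P, μ.eastIdx Q x = i) ∨ ∃ y < Q, μ.southIdx Q y = i := by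
  have hsub : (range P).image (μ.eastIdx Q) ∪ (range Q).image (μ.southIdx Q) ⊆ range (P + Q) := by
    simp only [union_subset_iff, image_subset_iff, mem_range]
    exact ⟨fun x => eastIdx_lt, fun y => southIdx_lt fun c hc => (hμ c hc).1⟩
  have hdisj : Disjoint ((range P).image (μ.eastIdx Q)) ((range Q).image (μ.southIdx Q)) := by
    simp only [disjoint_left, mem_image, mem_range, not_exists, not_and]
    rintro _ ⟨x, -, rfl⟩ y hy
    exact (eastIdx_ne_southIdx (fun c hc => (hμ c hc).2) hy).symm
  have hcard :
      #(range (P + Q)) ≤ #((range P).image (μ.eastIdx Q) ∪ (range Q).image (μ.southIdx Q)) := by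
    rw [card_union_of_disjoint hdisj, card_image_of_injective _ eastIdx_strictMono.injective,
      card_image_of_injOn (southIdx_strictAntiOn.injOn.mono (by simp)), card_range, card_range,
      card_range]
  have := eq_of_subset_of_card_le hsub hcard ▸ mem_range.mpr hi
  simpa only [mem_union, mem_image, mem_range] using this

theorem eastCount_mono : Monotone (μ.eastCount P Q) :=
  fun _ _ hij => card_le_card fun _ hx => by
    simp only [mem_filter] at hx ⊢
    exact ⟨hx.1, hx.2.trans_le hij⟩

theorem eastCount_eastIdx (hx : x ≤ P) : μ.eastCount P Q (μ.eastIdx Q x) = x := by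
  have : {z ∈ range P | μ.eastIdx Q z < μ.eastIdx Q x} = range x := by
    ext z
    simp only [mem_filter, mem_range, eastIdx_strictMono.lt_iff_lt]
    omega
  rw [eastCount, this, card_range]

theorem eastCount_eastIdx_add_one (hx : x < P) :
    μ.eastCount P Q (μ.eastIdx Q x + 1) = x + 1 := by
  have : {z ∈ range P | μ.eastIdx Q z < μ.eastIdx Q x + 1} = range (x + 1) := by
    ext z
    simp only [mem_filter, mem_range, Nat.lt_succ_iff, eastIdx_strictMono.le_iff_le]
    omega
  rw [eastCount, this, card_range]

theorem eastCount_southIdx (hμ : ∀ c ∈ μ, c.1 < P ∧ c.2 < Q) (hy : y < Q) :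
    μ.eastCount P Q (μ.southIdx Q y) = μ.colLen y := by
  have := colLen_le (fun c hc => (hμ c hc).1) y
  have : {z ∈ range P | μ.eastIdx Q z < μ.southIdx Q y} = range (μ.colLen y) := by
    ext z
    simp only [mem_filter, mem_range, eastIdx_lt_southIdx_iff (fun c hc => (hμ c hc).2) hy,
      mem_iff_lt_colLen]
    omega
  rw [eastCount, this, card_range]

theorem eastCount_southIdx_add_one (hμ : ∀ c ∈ μ, c.1 < P ∧ c.2 < Q) (hy : y < Q) :
    μ.eastCount P Q (μ.southIdx Q y + 1) = μ.colLen y := by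
  rw [← eastCount_southIdx hμ hy, eastCount, eastCount]
  congr 1
  refine filter_congr fun z _ => ?_
  have := eastIdx_ne_southIdx (x := z) (fun c hc => (hμ c hc).2) hy
  omega

theorem eastCount_zero : μ.eastCount P Q 0 = 0 := by
  simp [eastCount]

theorem eastCount_of_le (hi : P + Q ≤ i) : μ.eastCount P Q i = P := by
  rw [eastCount, filter_true_of_mem fun x hx => eastIdx_lt (mem_range.mp hx) |>.trans_le hi,
    card_range]

theorem eastCount_step (hμ : ∀ c ∈ μ, c.1 < P ∧ c.2 < Q) (hi : i < P + Q) :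
    (∃ x < P, μ.eastIdx Q x = i ∧ μ.eastCount P Q i = x ∧ μ.eastCount P Q (i + 1) = x + 1) ∨
      ∃ y < Q, μ.southIdx Q y = i ∧ μ.eastCount P Q i = μ.colLen y ∧
        μ.eastCount P Q (i + 1) = μ.colLen y := by
  rcases exists_eastIdx_or_southIdx hμ hi with ⟨x, hx, rfl⟩ | ⟨y, hy, rfl⟩
  · exact .inl ⟨x, hx, rfl, eastCount_eastIdx hx.le, eastCount_eastIdx_add_one hx⟩
  · exact .inr ⟨y, hy, rfl, eastCount_southIdx hμ hy, eastCount_southIdx_add_one hμ hy⟩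

def windowEastCount (μ : YoungDiagram) (P Q m i : ℕ) : ℕ :=
  μ.eastCount P Q (i + m) - μ.eastCount P Q i

theorem downCrossing_eastIdx_of_mem (hμ : ∀ c ∈ μ, c.1 < P ∧ c.2 < Q) (h : (x, y) ∈ μ)
    (ha : arm μ.cells (x, y) = a) (hl : leg μ.cells (x, y) = l) :
    μ.eastIdx Q x < P + Q - (a + l + 1) ∧ a < μ.windowEastCount P Q (a + l + 1) (μ.eastIdx Q x) ∧
      μ.windowEastCount P Q (a + l + 1) (μ.eastIdx Q x + 1) ≤ a := by
  have hy : y < Q := (hμ _ h).2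
  have hstep := southIdx_eq_eastIdx_add (fun c hc => (hμ c hc).2) h
  rw [ha, hl] at hstep
  have hrow := arm_add_add_one h
  have := southIdx_lt (fun c hc => (hμ c hc).1) hy
  unfold windowEastCount
  rw [← hstep, show μ.eastIdx Q x + 1 + (a + l + 1) = μ.southIdx Q y + 1 by omega,
    eastCount_southIdx hμ hy, eastCount_southIdx_add_one hμ hy,
    eastCount_eastIdx (hμ _ h).1.le, eastCount_eastIdx_add_one (hμ _ h).1]
  omega

theorem exists_mem_of_downCrossing (hμ : ∀ c ∈ μ, c.1 < P ∧ c.2 < Q)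
    (hi : i < P + Q - (a + l + 1)) (hdown : a < μ.windowEastCount P Q (a + l + 1) i)
    (hup : μ.windowEastCount P Q (a + l + 1) (i + 1) ≤ a) :
    ∃ x y, (x, y) ∈ μ ∧ arm μ.cells (x, y) = a ∧ leg μ.cells (x, y) = l ∧ μ.eastIdx Q x = i := by
  unfold windowEastCount at hdown hup
  rw [add_right_comm] at hup
  have hmono := eastCount_mono (μ := μ) (P := P) (Q := Q) (show i + 1 ≤ i + (a + l + 1) by omega)
  -- The window count drops only if step `i` is east and step `i + a + l + 1` is south.
  rcases eastCount_step hμ (show i < P + Q by omega) with ⟨x, hx, rfl, hN, hN'⟩ | ⟨y, _, _, hN, hN'⟩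
  · rcases eastCount_step hμ (show μ.eastIdx Q x + (a + l + 1) < P + Q by omega) with
      ⟨_, _, _, hM, hM'⟩ | ⟨y, hy, hyi, hM, hM'⟩
    · omega
    · have hmem : (x, y) ∈ μ := mem_iff_lt_colLen.mpr (by omega)
      have hrow := arm_add_add_one hmem
      have hstep := southIdx_eq_eastIdx_add (fun c hc => (hμ c hc).2) hmem
      exact ⟨x, y, hmem, by omega, by omega, rfl⟩
  · rcases eastCount_step hμ (show i + (a + l + 1) < P + Q by omega) with
      ⟨_, _, _, hM, hM'⟩ | ⟨_, _, _, hM, hM'⟩ <;> omega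

theorem upCrossing_southIdx_of_not_mem (hμ : ∀ c ∈ μ, c.1 < P ∧ c.2 < Q) (hx : x < P) (hy : y < Q)
    (h : (x, y) ∉ μ) (ha : coArm μ.cells (x, y) = a) (hl : coLeg μ.cells (x, y) = l) :
    μ.southIdx Q y < P + Q - (a + l + 1) ∧ μ.windowEastCount P Q (a + l + 1) (μ.southIdx Q y) ≤ a ∧
      a < μ.windowEastCount P Q (a + l + 1) (μ.southIdx Q y + 1) := by
  have hstep := eastIdx_eq_southIdx_add hy h
  rw [ha, hl] at hstep
  have hrow := coArm_add_colLen h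
  have := eastIdx_lt (μ := μ) (Q := Q) hx
  unfold windowEastCount
  rw [← hstep, show μ.southIdx Q y + 1 + (a + l + 1) = μ.eastIdx Q x + 1 by omega,
    eastCount_eastIdx hx.le, eastCount_eastIdx_add_one hx, eastCount_southIdx hμ hy,
    eastCount_southIdx_add_one hμ hy]
  omega

theorem exists_not_mem_of_upCrossing (hμ : ∀ c ∈ μ, c.1 < P ∧ c.2 < Q)
    (hi : i < P + Q - (a + l + 1)) (hdown : μ.windowEastCount P Q (a + l + 1) i ≤ a)
    (hup : a < μ.windowEastCount P Q (a + l + 1) (i + 1)) :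
    ∃ x y, x < P ∧ y < Q ∧ (x, y) ∉ μ ∧ coArm μ.cells (x, y) = a ∧ coLeg μ.cells (x, y) = l ∧
      μ.southIdx Q y = i := by
  unfold windowEastCount at hdown hup
  rw [add_right_comm] at hup
  have hmono := eastCount_mono (μ := μ) (P := P) (Q := Q) (show i + 1 ≤ i + (a + l + 1) by omega)
  rcases eastCount_step hμ (show i < P + Q by omega) with ⟨_, _, _, hN, hN'⟩ | ⟨y, hy, rfl, hN, hN'⟩
  · rcases eastCount_step hμ (show i + (a + l + 1) < P + Q by omega) with
      ⟨_, _, _, hM, hM'⟩ | ⟨_, _, _, hM, hM'⟩ <;> omega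
  · rcases eastCount_step hμ (show μ.southIdx Q y + (a + l + 1) < P + Q by omega) with
      ⟨x, hx, hxi, hM, hM'⟩ | ⟨_, _, _, hM, hM'⟩
    · have hmem : (x, y) ∉ μ := fun hmem => by
        have := mem_iff_lt_colLen.mp hmem
        omega
      have hrow := coArm_add_colLen hmem
      have hstep := eastIdx_eq_southIdx_add hy hmem
      exact ⟨x, y, hx, hy, hmem, by omega, by omega, rfl⟩
    · omega

theorem card_filter_arm_leg (hμ : ∀ c ∈ μ, c.1 < P ∧ c.2 < Q) (a l : ℕ) :
    #{c ∈ μ.cells | arm μ.cells c = a ∧ leg μ.cells c = l}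
      = #{i ∈ range (P + Q - (a + l + 1)) | a < μ.windowEastCount P Q (a + l + 1) i ∧
          μ.windowEastCount P Q (a + l + 1) (i + 1) ≤ a} := by
  have hinj : Set.InjOn (fun c : ℕ × ℕ => μ.eastIdx Q c.1)
      ({c ∈ μ.cells | arm μ.cells c = a ∧ leg μ.cells c = l} : Finset (ℕ × ℕ)) := by
    rintro ⟨x, y⟩ hc ⟨x', y'⟩ hc' hxx'
    simp only [mem_coe, mem_filter, mem_cells] at hc hc'
    obtain rfl : x = x' := eastIdx_strictMono.injective hxx'
    have := leg_add_add_one hc.1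
    have := leg_add_add_one hc'.1
    obtain rfl : y = y' := by omega
    rfl
  rw [← card_image_of_injOn hinj]
  congr 1
  ext i
  simp only [mem_image, mem_filter, mem_range, mem_cells, Prod.exists]
  constructor
  · rintro ⟨x, y, ⟨hmem, ha, hl⟩, rfl⟩
    exact downCrossing_eastIdx_of_mem hμ hmem ha hl
  · rintro ⟨hi, hdown, hup⟩
    obtain ⟨x, y, hmem, ha, hl, rfl⟩ := exists_mem_of_downCrossing hμ hi hdown hup
    exact ⟨x, y, ⟨hmem, ha, hl⟩, rfl⟩

theorem card_filter_coArm_coLeg (hμ : ∀ c ∈ μ, c.1 < P ∧ c.2 < Q) (a l : ℕ) :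
    #{c ∈ range P ×ˢ range Q | c ∉ μ.cells ∧ coArm μ.cells c = a ∧ coLeg μ.cells c = l}
      = #{i ∈ range (P + Q - (a + l + 1)) | μ.windowEastCount P Q (a + l + 1) i ≤ a ∧
          a < μ.windowEastCount P Q (a + l + 1) (i + 1)} := by
  have hinj : Set.InjOn (fun c : ℕ × ℕ => μ.southIdx Q c.2)
      ({c ∈ range P ×ˢ range Q | c ∉ μ.cells ∧ coArm μ.cells c = a ∧ coLeg μ.cells c = l} :
        Finset (ℕ × ℕ)) := by
    rintro ⟨x, y⟩ hc ⟨x', y'⟩ hc' hyy'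
    simp only [mem_coe, mem_filter, mem_product, mem_range, mem_cells] at hc hc'
    obtain rfl : y = y' := southIdx_strictAntiOn.injOn hc.1.2 hc'.1.2 hyy'
    have := coArm_add_colLen hc.2.1
    have := coArm_add_colLen hc'.2.1
    obtain rfl : x = x' := by omega
    rfl
  rw [← card_image_of_injOn hinj]
  congr 1
  ext i
  simp only [mem_image, mem_filter, mem_product, mem_range, mem_cells, Prod.exists]
  constructor
  · rintro ⟨x, y, ⟨⟨hx, hy⟩, hmem, ha, hl⟩, rfl⟩
    exact upCrossing_southIdx_of_not_mem hμ hx hy hmem ha hl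
  · rintro ⟨hi, hdown, hup⟩
    obtain ⟨x, y, hx, hy, hmem, ha, hl, rfl⟩ := exists_not_mem_of_upCrossing hμ hi hdown hup
    exact ⟨x, y, ⟨⟨hx, hy⟩, hmem, ha, hl⟩, rfl⟩

theorem lt_windowEastCount_zero (ha : a < P) (h : (a, Q - 1 - l) ∈ μ) :
    a < μ.windowEastCount P Q (a + l + 1) 0 := by
  have := mem_iff_lt_rowLen.mp h
  have hle : μ.eastIdx Q a + 1 ≤ 0 + (a + l + 1) := by
    unfold eastIdx
    omega
  have := eastCount_mono (μ := μ) (P := P) (Q := Q) hle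
  rw [eastCount_eastIdx_add_one ha] at this
  rw [windowEastCount, eastCount_zero]
  omega

theorem lt_windowEastCount_end (ha : a < P) (h : (P - a - 1, l) ∉ μ) :
    a < μ.windowEastCount P Q (a + l + 1) (P + Q - (a + l + 1)) := by
  have := not_lt.mp (mt mem_iff_lt_rowLen.mpr h)
  have hle : P + Q - (a + l + 1) ≤ μ.eastIdx Q (P - a - 1) := by
    unfold eastIdx
    omega
  have := eastCount_mono (μ := μ) (P := P) (Q := Q) hle
  rw [eastCount_eastIdx (by omega)] at this
  rw [windowEastCount, eastCount_of_le (by omega)]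
  omega

end YoungDiagram

theorem lt_and_lt_of_below_diagonal {p q K x y : ℕ} (hp : 0 < p) (hq : 0 < q)
    (h : q * x + p * y + p + q ≤ K * p * q) : x < K * p ∧ y < K * q := by
  constructor <;> nlinarith

open YoungDiagram in
theorem inside_rectangle_case_inside_general (D : Finset (ℕ × ℕ)) (hD : IsYoung D)
    (p q K : ℕ) (hp : 0 < p) (hq : 0 < q)
    (hdiag : ∀ c ∈ D, q * c.1 + p * c.2 + p + q ≤ K * p * q)
    (a l : ℕ) (ha : a < K * p)
    (hslope : q * (a + 1) ≤ p * l)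
    (hbox : (a, K * q - 1 - l) ∈ D) :
    (D.filter fun c => arm D c = a ∧ leg D c = l).card
      = (((Finset.range (K * p)) ×ˢ (Finset.range (K * q))).filter
          fun c => c ∉ D ∧ coArm D c = a ∧ coLeg D c = l).card := by
  let μ := hD.toYoungDiagram
  have hμ : ∀ c ∈ μ, c.1 < K * p ∧ c.2 < K * q := fun c hc =>
    lt_and_lt_of_below_diagonal hp hq (hdiag c hc)
  have hcorner : (K * p - a - 1, l) ∉ μ := fun h => by
    have := hdiag _ h
    have : K * p - a - 1 + (a + 1) = K * p := by omega
    nlinarith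
  calc #{c ∈ μ.cells | arm μ.cells c = a ∧ leg μ.cells c = l}
      _ = _ := card_filter_arm_leg hμ a l
      _ = _ := card_downCrossings_eq_card_upCrossings (lt_windowEastCount_zero ha hbox)
                (lt_windowEastCount_end ha hcorner)
      _ = _ := (card_filter_coArm_coLeg hμ a l).symm

theorem inside_rectangle_case_inside (D : Finset (ℕ × ℕ)) (hD : IsYoung D)
    (p q K : ℕ) (hp : 0 < p) (hq : 0 < q) (hK : 0 < K) (hpq : Nat.Coprime p q)
    (hdiag : ∀ c ∈ D, q * c.1 + p * c.2 + p + q ≤ K * p * q)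
    (a l : ℕ) (ha : a < K * p) (hl : l < K * q)
    (hslope : q * (a + 1) ≤ p * l)
    (hbox : (a, K * q - 1 - l) ∈ D) :
    (D.filter fun c => arm D c = a ∧ leg D c = l).card
      = (((Finset.range (K * p)) ×ˢ (Finset.range (K * q))).filter
          fun c => c ∉ D ∧ coArm D c = a ∧ coLeg D c = l).card :=
  inside_rectangle_case_inside_general D hD p q K hp hq hdiag a l ha hslope hbox
end

section
/- Let D be a Young diagram, p, q coprime positive integers, K a positive integer, P = Kp, Q = Kq, with qx + py \leq Kpq - p - q for every box (x,y) \in D. Then |{c \in D : p·l(c) \geq q·(a(c)+1)}| + |R^+_{P,Q} \ D| = |{c' \in R_{P,Q} \ D : p·l(c') \geq q·(a(c')+1)}|, where R^+_{P,Q} = {(x,y) \in (Z_{\geq 0})^2 : qx + py \leq Kpq - p - q} and R_{P,Q} = {0,...,P-1} \times {0,...,Q-1}. -/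
/-
Call a cell of `R = [0, Kp) × [0, Kq)` *marked* if it lies in `D` and violates `q (a + 1) ≤ p l`,
or lies outside `D` and satisfies it. The theorem amounts to `R` having exactly `|R⁺|` marked
cells. For `D = ∅` this is the reflection `y ↦ Kq - 1 - y`; in general we show that deleting a
removable corner `(x₀, y₀)` of `D` does not change the number of marked cells.

Walk along the boundary of `D` from `(0, Kq)` to `(Kp, 0)` and record the level `qX + pY`: east
steps raise it by `q`, south steps lower it by `p`. A cell `(x, y)` is marked according to how the
level of the east step of column `x` compares with that of the south step of row `y`. Deleting the
corner only affects row `y₀` and column `x₀`, and there the marking changes exactly at the steps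
crossing the levels `L = q x₀ + p y₀` (after the corner) and `L + p + q - 1` (before it). Along a
monotone staircase, up- and down-crossings of a level differ by the change of `[level ≤ θ]` between
the endpoints (a discrete Green formula), and with `L + p + q ≤ Kpq` these contributions cancel.
-/

open Finset

namespace GorskyMazin

/- Discrete Green formula for the staircase with column heights `μ` and row lengths `ν`: both
sums differ from telescoping sums along the bottom and left edges by the mixed second differences
of `φ` over the cells under the staircase, counted once by columns and once by rows. -/
theorem sum_staircase_boundary {M : Type*} [AddCommGroup M] (φ : ℕ → ℕ → M) (μ ν : ℕ → ℕ)
    {a b c d : ℕ} (hac : a ≤ c) (hdb : d ≤ b)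
    (hμ : ∀ x ∈ Ico a c, μ x ∈ Icc d b) (hν : ∀ y ∈ Ico d b, ν y ∈ Icc a c)
    (hconj : ∀ x ∈ Ico a c, ∀ y ∈ Ico d b, y < μ x ↔ x < ν y) :
    ∑ x ∈ Ico a c, (φ (x + 1) (μ x) - φ x (μ x))
      + ∑ y ∈ Ico d b, (φ (ν y) y - φ (ν y) (y + 1)) = φ c d - φ a b := by
  set δ : ℕ → ℕ → M := fun x y => φ (x + 1) (y + 1) - φ x (y + 1) - (φ (x + 1) y - φ x y)
  have hcol : ∀ x ∈ Ico a c, φ (x + 1) (μ x) - φ x (μ x)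
      = (φ (x + 1) d - φ x d) + ∑ y ∈ Ico d b, if y < μ x then δ x y else 0 := by
    intro x hx
    obtain ⟨hd, hb⟩ := mem_Icc.1 (hμ x hx)
    rw [← sum_filter, Ico_filter_lt, min_eq_right hb,
      sum_Ico_sub (fun y => φ (x + 1) y - φ x y) hd]
    abel
  have hrow : ∀ y ∈ Ico d b, φ (ν y) y - φ (ν y) (y + 1)
      = (φ a y - φ a (y + 1)) - ∑ x ∈ Ico a c, if x < ν y then δ x y else 0 := by
    intro y hy
    obtain ⟨ha, hc⟩ := mem_Icc.1 (hν y hy)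
    have hδ : ∀ x, δ x y = (φ (x + 1) (y + 1) - φ (x + 1) y) - (φ x (y + 1) - φ x y) :=
      fun x => by simp only [δ]; abel
    rw [← sum_filter, Ico_filter_lt, min_eq_right hc, sum_congr rfl fun x _ => hδ x,
      sum_Ico_sub (fun x => φ x (y + 1) - φ x y) ha]
    abel
  have hcells : ∑ x ∈ Ico a c, ∑ y ∈ Ico d b, (if y < μ x then δ x y else 0)
      = ∑ y ∈ Ico d b, ∑ x ∈ Ico a c, (if x < ν y then δ x y else 0) := by
    rw [sum_comm]
    exact sum_congr rfl fun y hy => sum_congr rfl fun x hx => if_congr (hconj x hx y hy) rfl rfl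
  have hbottom := sum_Ico_sub (fun x => φ x d) hac
  have hleft := sum_Ico_sub (fun y => φ a y) hdb
  rw [sum_congr rfl hcol, sum_congr rfl hrow]
  simp only [sum_add_distrib, sum_sub_distrib] at hbottom hleft ⊢
  rw [hcells]
  linear_combination (norm := abel) hbottom - hleft

/- Along a lattice path the east step `(x, h) → (x + 1, h)` raises `q X + p Y` by `q` and the
south step `(w, y + 1) → (w, y)` lowers it by `p`; these say that the step crosses the level `θ`. -/
abbrev UpCrossing (p q θ x h : ℕ) : Prop := q * x + p * h ≤ θ ∧ θ < q * x + p * h + q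

abbrev DownCrossing (p q θ w y : ℕ) : Prop := q * w + p * y ≤ θ ∧ θ < q * w + p * y + p

theorem sum_downCrossing_sub_sum_upCrossing (p q θ : ℕ) (μ ν : ℕ → ℕ) {a b c d : ℕ}
    (hac : a ≤ c) (hdb : d ≤ b)
    (hμ : ∀ x ∈ Ico a c, μ x ∈ Icc d b) (hν : ∀ y ∈ Ico d b, ν y ∈ Icc a c)
    (hconj : ∀ x ∈ Ico a c, ∀ y ∈ Ico d b, y < μ x ↔ x < ν y) :
    (∑ y ∈ Ico d b, if DownCrossing p q θ (ν y) y then 1 else 0 : ℤ)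
      - ∑ x ∈ Ico a c, (if UpCrossing p q θ x (μ x) then 1 else 0)
      = (if q * c + p * d ≤ θ then 1 else 0) - (if q * a + p * b ≤ θ then 1 else 0) := by
  rw [← sum_staircase_boundary (fun X Y => if q * X + p * Y ≤ θ then (1 : ℤ) else 0) μ ν hac hdb
    hμ hν hconj, sub_eq_neg_add, ← sum_neg_distrib]
  congr 1 <;> refine sum_congr rfl fun _ _ => ?_ <;>
    simp only [UpCrossing, DownCrossing, mul_add_one] <;> split_ifs <;> omega

theorem sum_range_product_of_support_cross {M : Type*} [AddCommMonoid M] (f : ℕ × ℕ → M)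
    {m n x₀ y₀ : ℕ} (hx₀ : x₀ < m) (hy₀ : y₀ < n)
    (hf : ∀ x y, x ≠ x₀ → y ≠ y₀ → f (x, y) = 0) :
    ∑ c ∈ range m ×ˢ range n, f c
      = ∑ y ∈ range y₀, f (x₀, y) + ∑ y ∈ Ico (y₀ + 1) n, f (x₀, y)
        + ∑ x ∈ range x₀, f (x, y₀) + ∑ x ∈ Ico (x₀ + 1) m, f (x, y₀) + f (x₀, y₀) := by
  have hsplit (g : ℕ → M) {i k : ℕ} (h : i < k) :
      ∑ j ∈ range k, g j = ∑ j ∈ range i, g j + g i + ∑ j ∈ Ico (i + 1) k, g j := by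
    rw [← sum_range_add_sum_Ico _ h.le, sum_eq_sum_Ico_succ_bot h, add_assoc]
  have hcol (x : ℕ) (hx : x ≠ x₀) : ∑ y ∈ range n, f (x, y) = f (x, y₀) :=
    sum_eq_single_of_mem y₀ (mem_range.2 hy₀) fun y _ hy => hf x y hx hy
  rw [sum_product, hsplit _ hx₀, hsplit _ hy₀,
    sum_congr rfl fun x hx => hcol x (mem_range.1 hx).ne,
    sum_congr rfl fun x hx => hcol x (by have := mem_Ico.1 hx; omega)]
  abel

def colHeight (D : Finset (ℕ × ℕ)) (x : ℕ) : ℕ := #{c ∈ D | c.1 = x}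

def rowLength (D : Finset (ℕ × ℕ)) (y : ℕ) : ℕ := #{c ∈ D | c.2 = y}

variable {D : Finset (ℕ × ℕ)} {x₀ y₀ : ℕ}

def _root_.IsYoung.toYoungDiagram_s7 (hD : IsYoung D) : YoungDiagram :=
  ⟨D, fun _ _ hle hmem => hD _ _ _ _ hmem hle.1 hle.2⟩

-- Mathlib's `YoungDiagram` indexes cells as (row, column), so its `rowLen x` is `colHeight D x`.
theorem _root_.IsYoung.mem_iff_lt_colHeight (hD : IsYoung D) {x y : ℕ} :
    (x, y) ∈ D ↔ y < colHeight D x := by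
  have := hD.toYoungDiagram_s7.mem_iff_lt_rowLen (i := x) (j := y)
  rwa [YoungDiagram.rowLen_eq_card] at this

theorem _root_.IsYoung.mem_iff_lt_rowLength (hD : IsYoung D) {x y : ℕ} :
    (x, y) ∈ D ↔ x < rowLength D y := by
  have := hD.toYoungDiagram_s7.mem_iff_lt_colLen (i := x) (j := y)
  rwa [YoungDiagram.colLen_eq_card] at this

theorem _root_.IsYoung.arm_eq (hD : IsYoung D) (x y : ℕ) :
    arm D (x, y) = rowLength D y - x - 1 := by
  have : {d ∈ D | d.2 = y ∧ x < d.1} = Ioo x (rowLength D y) ×ˢ {y} := by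
    ext ⟨a, b⟩
    simp only [mem_filter, mem_product, mem_Ioo, mem_singleton]
    constructor
    · rintro ⟨h, rfl, hx⟩
      exact ⟨⟨hx, hD.mem_iff_lt_rowLength.1 h⟩, rfl⟩
    · rintro ⟨⟨hx, h⟩, rfl⟩
      exact ⟨hD.mem_iff_lt_rowLength.2 h, rfl, hx⟩
  rw [arm, this, card_product, card_singleton, mul_one, Nat.card_Ioo]

theorem _root_.IsYoung.leg_eq (hD : IsYoung D) (x y : ℕ) :
    leg D (x, y) = colHeight D x - y - 1 := by
  have : {d ∈ D | d.1 = x ∧ y < d.2} = {x} ×ˢ Ioo y (colHeight D x) := by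
    ext ⟨a, b⟩
    simp only [mem_filter, mem_product, mem_Ioo, mem_singleton]
    constructor
    · rintro ⟨h, rfl, hy⟩
      exact ⟨rfl, hy, hD.mem_iff_lt_colHeight.1 h⟩
    · rintro ⟨rfl, hy, h⟩
      exact ⟨hD.mem_iff_lt_colHeight.2 h, rfl, hy⟩
  rw [leg, this, card_product, card_singleton, one_mul, Nat.card_Ioo]

theorem _root_.IsYoung.coArm_eq (hD : IsYoung D) (x y : ℕ) :
    coArm D (x, y) = x - rowLength D y := by
  have : {x' ∈ range x | (x', y) ∉ D} = Ico (rowLength D y) x := by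
    ext a
    simp only [mem_filter, mem_range, mem_Ico, hD.mem_iff_lt_rowLength]
    omega
  rw [coArm, this, Nat.card_Ico]

theorem _root_.IsYoung.coLeg_eq (hD : IsYoung D) (x y : ℕ) :
    coLeg D (x, y) = y - colHeight D x := by
  have : {y' ∈ range y | (x, y') ∉ D} = Ico (colHeight D x) y := by
    ext b
    simp only [mem_filter, mem_range, mem_Ico, hD.mem_iff_lt_colHeight]
    omega
  rw [coLeg, this, Nat.card_Ico]

theorem _root_.IsYoung.erase_corner (hD : IsYoung D) (hr : (x₀ + 1, y₀) ∉ D)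
    (ha : (x₀, y₀ + 1) ∉ D) : IsYoung (D.erase (x₀, y₀)) := by
  intro x y x' y' hxy hx hy
  obtain ⟨hne, hxy⟩ := mem_erase.1 hxy
  refine mem_erase.2 ⟨?_, hD x y x' y' hxy hx hy⟩
  rintro ⟨⟩
  rcases Nat.lt_or_ge x₀ x with h | h
  · exact hr (hD x y _ _ hxy h hy)
  · rcases Nat.lt_or_ge y₀ y with h' | h'
    · exact ha (hD x y _ _ hxy hx h')
    · exact hne (by rw [le_antisymm hx h, le_antisymm hy h'])

theorem colHeight_erase_of_ne {x x' y' : ℕ} (h : x' ≠ x) :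
    colHeight (D.erase (x', y')) x = colHeight D x := by
  rw [colHeight, filter_erase,
    erase_eq_of_notMem (s := {d ∈ D | d.1 = x}) fun hc => h (mem_filter.1 hc).2, colHeight]

theorem rowLength_erase_of_ne {y x' y' : ℕ} (h : y' ≠ y) :
    rowLength (D.erase (x', y')) y = rowLength D y := by
  rw [rowLength, filter_erase,
    erase_eq_of_notMem (s := {d ∈ D | d.2 = y}) fun hc => h (mem_filter.1 hc).2, rowLength]

theorem _root_.IsYoung.colHeight_corner (hD : IsYoung D) (hc : (x₀, y₀) ∈ D)
    (ha : (x₀, y₀ + 1) ∉ D) :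
    colHeight D x₀ = y₀ + 1 ∧ colHeight (D.erase (x₀, y₀)) x₀ = y₀ := by
  have h₁ := hD.mem_iff_lt_colHeight.1 hc
  have h₂ := mt hD.mem_iff_lt_colHeight.2 ha
  refine ⟨by omega, ?_⟩
  rw [colHeight, filter_erase, card_erase_of_mem (s := {d ∈ D | d.1 = x₀}) (mem_filter.2 ⟨hc, rfl⟩)]
  change colHeight D x₀ - 1 = y₀
  omega

theorem _root_.IsYoung.rowLength_corner (hD : IsYoung D) (hc : (x₀, y₀) ∈ D)
    (hr : (x₀ + 1, y₀) ∉ D) :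
    rowLength D y₀ = x₀ + 1 ∧ rowLength (D.erase (x₀, y₀)) y₀ = x₀ := by
  have h₁ := hD.mem_iff_lt_rowLength.1 hc
  have h₂ := mt hD.mem_iff_lt_rowLength.2 hr
  refine ⟨by omega, ?_⟩
  rw [rowLength, filter_erase, card_erase_of_mem (s := {d ∈ D | d.2 = y₀}) (mem_filter.2 ⟨hc, rfl⟩)]
  change rowLength D y₀ - 1 = x₀
  omega

theorem exists_corner (hne : D.Nonempty) :
    ∃ x y, (x, y) ∈ D ∧ (x + 1, y) ∉ D ∧ (x, y + 1) ∉ D := by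
  obtain ⟨c, hc, hmax⟩ := D.exists_max_image (fun c => c.1 + c.2) hne
  exact ⟨c.1, c.2, hc, fun h => by have := hmax _ h; simp at this,
    fun h => by have := hmax _ h; simp at this⟩

def Marked (p q : ℕ) (D : Finset (ℕ × ℕ)) (c : ℕ × ℕ) : Prop :=
  if c ∈ D then ¬ q * (arm D c + 1) ≤ p * leg D c else q * (coArm D c + 1) ≤ p * coLeg D c

instance (p q : ℕ) (D : Finset (ℕ × ℕ)) : DecidablePred (Marked p q D) :=
  fun _ => inferInstanceAs (Decidable (ite _ _ _))

def markedCount (p q m n : ℕ) (D : Finset (ℕ × ℕ)) : ℕ :=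
  #{c ∈ range m ×ˢ range n | Marked p q D c}

-- `q * x + p * colHeight D x` is the level `q X + p Y` at the start of the east step of
-- column `x` on the boundary of `D`; `q * rowLength D y + p * y + p` is that of the south step
-- of row `y`.
theorem marked_iff {p q : ℕ} (hD : IsYoung D) (x y : ℕ) :
    Marked p q D (x, y) ↔ if (x, y) ∈ D
      then q * x + p * colHeight D x < q * rowLength D y + p * y + p
      else q * x + p * colHeight D x + q ≤ q * rowLength D y + p * y := by
  unfold Marked
  split_ifs with h
  · have hx := hD.mem_iff_lt_rowLength.1 h
    have hy := hD.mem_iff_lt_colHeight.1 h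
    have harm : arm D (x, y) + 1 = rowLength D y - x := by rw [hD.arm_eq]; omega
    rw [harm, hD.leg_eq, Nat.sub_sub, not_le]
    zify [hx.le, Nat.succ_le_of_lt hy]
    constructor <;> intro <;> linarith
  · have hx := not_lt.1 (mt hD.mem_iff_lt_rowLength.2 h)
    have hy := not_lt.1 (mt hD.mem_iff_lt_colHeight.2 h)
    rw [hD.coArm_eq, hD.coLeg_eq]
    zify [hx, hy]
    constructor <;> intro <;> linarith

section Corner

variable {p q : ℕ}

theorem marked_erase_corner_of_ne (hD : IsYoung D) (hr : (x₀ + 1, y₀) ∉ D)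
    (ha : (x₀, y₀ + 1) ∉ D) {x y : ℕ} (hx : x ≠ x₀) (hy : y ≠ y₀) :
    Marked p q (D.erase (x₀, y₀)) (x, y) ↔ Marked p q D (x, y) := by
  have hmem : (x, y) ∈ D.erase (x₀, y₀) ↔ (x, y) ∈ D := by simp [hx]
  simp only [marked_iff hD, marked_iff (hD.erase_corner hr ha), colHeight_erase_of_ne hx.symm,
    rowLength_erase_of_ne hy.symm, hmem]

theorem marked_erase_corner_self (hq : 0 < q) (hD : IsYoung D) (hc : (x₀, y₀) ∈ D)
    (hr : (x₀ + 1, y₀) ∉ D) (ha : (x₀, y₀ + 1) ∉ D) :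
    (if Marked p q D (x₀, y₀) then 1 else 0 : ℤ)
      - (if Marked p q (D.erase (x₀, y₀)) (x₀, y₀) then 1 else 0) = 1 := by
  obtain ⟨hμ, hμ'⟩ := hD.colHeight_corner hc ha
  obtain ⟨hν, hν'⟩ := hD.rowLength_corner hc hr
  simp only [marked_iff hD, marked_iff (hD.erase_corner hr ha), hc, notMem_erase, ↓reduceIte,
    hμ, hμ', hν, hν', mul_add_one]
  split_ifs <;> omega

theorem marked_erase_corner_below (hD : IsYoung D) (hc : (x₀, y₀) ∈ D)
    (hr : (x₀ + 1, y₀) ∉ D) (ha : (x₀, y₀ + 1) ∉ D) {y : ℕ} (hy : y < y₀) :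
    (if Marked p q D (x₀, y) then 1 else 0 : ℤ)
      - (if Marked p q (D.erase (x₀, y₀)) (x₀, y) then 1 else 0)
      = -(if DownCrossing p q (q * x₀ + p * y₀) (rowLength D y) y then 1 else 0) := by
  obtain ⟨hμ, hμ'⟩ := hD.colHeight_corner hc ha
  have hmem : (x₀, y) ∈ D := hD _ _ _ _ hc le_rfl hy.le
  have hmem' : (x₀, y) ∈ D.erase (x₀, y₀) := mem_erase.2 ⟨by simp [hy.ne], hmem⟩
  simp only [marked_iff hD, marked_iff (hD.erase_corner hr ha), hmem, hmem', ↓reduceIte,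
    rowLength_erase_of_ne hy.ne', hμ, hμ', mul_add_one, DownCrossing]
  split_ifs <;> omega

theorem marked_erase_corner_above (hD : IsYoung D) (hc : (x₀, y₀) ∈ D)
    (hr : (x₀ + 1, y₀) ∉ D) (ha : (x₀, y₀ + 1) ∉ D) {y : ℕ} (hy : y₀ < y) :
    (if Marked p q D (x₀, y) then 1 else 0 : ℤ)
      - (if Marked p q (D.erase (x₀, y₀)) (x₀, y) then 1 else 0)
      = -(if DownCrossing p q (q * x₀ + p * y₀ + p + q - 1) (rowLength D y) y then 1 else 0) := by
  obtain ⟨hμ, hμ'⟩ := hD.colHeight_corner hc ha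
  have hmem : (x₀, y) ∉ D := fun h => ha (hD _ _ _ _ h le_rfl hy)
  have hmem' : (x₀, y) ∉ D.erase (x₀, y₀) := fun h => hmem (mem_of_mem_erase h)
  simp only [marked_iff hD, marked_iff (hD.erase_corner hr ha), hmem, hmem', ↓reduceIte,
    rowLength_erase_of_ne hy.ne, hμ, hμ', mul_add_one, DownCrossing]
  split_ifs <;> omega

theorem marked_erase_corner_left (hD : IsYoung D) (hc : (x₀, y₀) ∈ D)
    (hr : (x₀ + 1, y₀) ∉ D) (ha : (x₀, y₀ + 1) ∉ D) {x : ℕ} (hx : x < x₀) :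
    (if Marked p q D (x, y₀) then 1 else 0 : ℤ)
      - (if Marked p q (D.erase (x₀, y₀)) (x, y₀) then 1 else 0)
      = if UpCrossing p q (q * x₀ + p * y₀ + p + q - 1) x (colHeight D x) then 1 else 0 := by
  obtain ⟨hν, hν'⟩ := hD.rowLength_corner hc hr
  have hmem : (x, y₀) ∈ D := hD _ _ _ _ hc hx.le le_rfl
  have hmem' : (x, y₀) ∈ D.erase (x₀, y₀) := mem_erase.2 ⟨by simp [hx.ne], hmem⟩
  simp only [marked_iff hD, marked_iff (hD.erase_corner hr ha), hmem, hmem', ↓reduceIte,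
    colHeight_erase_of_ne hx.ne', hν, hν', mul_add_one, UpCrossing]
  split_ifs <;> omega

theorem marked_erase_corner_right (hD : IsYoung D) (hc : (x₀, y₀) ∈ D)
    (hr : (x₀ + 1, y₀) ∉ D) (ha : (x₀, y₀ + 1) ∉ D) {x : ℕ} (hx : x₀ < x) :
    (if Marked p q D (x, y₀) then 1 else 0 : ℤ)
      - (if Marked p q (D.erase (x₀, y₀)) (x, y₀) then 1 else 0)
      = if UpCrossing p q (q * x₀ + p * y₀) x (colHeight D x) then 1 else 0 := by
  obtain ⟨hν, hν'⟩ := hD.rowLength_corner hc hr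
  have hmem : (x, y₀) ∉ D := fun h => hr (hD _ _ _ _ h hx le_rfl)
  have hmem' : (x, y₀) ∉ D.erase (x₀, y₀) := fun h => hmem (mem_of_mem_erase h)
  simp only [marked_iff hD, marked_iff (hD.erase_corner hr ha), hmem, hmem', ↓reduceIte,
    colHeight_erase_of_ne hx.ne, hν, hν', mul_add_one, UpCrossing]
  split_ifs <;> omega

theorem _root_.IsYoung.crossings_after_corner (hq : 0 < q) (hD : IsYoung D) {m n : ℕ}
    (hDR : D ⊆ range m ×ˢ range n) (hc : (x₀, y₀) ∈ D) (hr : (x₀ + 1, y₀) ∉ D)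
    (hm : q * x₀ + p * y₀ < q * m) :
    (∑ y ∈ range y₀, if DownCrossing p q (q * x₀ + p * y₀) (rowLength D y) y then 1 else 0 : ℤ)
      = ∑ x ∈ Ico (x₀ + 1) m,
          if UpCrossing p q (q * x₀ + p * y₀) x (colHeight D x) then 1 else 0 := by
  have hx₀ : x₀ < m := (mem_product.1 (hDR hc)).1 |> mem_range.1
  have hcross := sum_downCrossing_sub_sum_upCrossing p q (q * x₀ + p * y₀)
    (colHeight D) (rowLength D)
    (a := x₀ + 1) (c := m) (d := 0) (b := y₀) hx₀ (Nat.zero_le _) ?_ ?_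
    fun x _ y _ => hD.mem_iff_lt_colHeight.symm.trans hD.mem_iff_lt_rowLength
  · rw [range_eq_Ico, ← sub_eq_zero, hcross, mul_add_one, if_neg (by omega), if_neg (by omega),
      sub_zero]
  · intro x hx
    refine mem_Icc.2 ⟨Nat.zero_le _, not_lt.1 fun h => hr ?_⟩
    exact hD _ _ _ _ (hD.mem_iff_lt_colHeight.2 h) (mem_Ico.1 hx).1 le_rfl
  · intro y hy
    refine mem_Icc.2 ⟨hD.mem_iff_lt_rowLength.1 (hD _ _ _ _ hc le_rfl (mem_Ico.1 hy).2.le),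
      not_lt.1 fun h => ?_⟩
    simpa using hDR (hD.mem_iff_lt_rowLength.2 h)

theorem _root_.IsYoung.crossings_before_corner (hq : 0 < q) (hD : IsYoung D) {m n : ℕ}
    (hDR : D ⊆ range m ×ˢ range n) (hc : (x₀, y₀) ∈ D) (ha : (x₀, y₀ + 1) ∉ D)
    (hn : q * x₀ + p * y₀ + p + q ≤ p * n) :
    (∑ y ∈ Ico (y₀ + 1) n,
        if DownCrossing p q (q * x₀ + p * y₀ + p + q - 1) (rowLength D y) y then 1 else 0 : ℤ)
      = (∑ x ∈ range x₀,
          if UpCrossing p q (q * x₀ + p * y₀ + p + q - 1) x (colHeight D x) then 1 else 0) + 1 := by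
  have hy₀ : y₀ < n := (mem_product.1 (hDR hc)).2 |> mem_range.1
  have hcross := sum_downCrossing_sub_sum_upCrossing p q (q * x₀ + p * y₀ + p + q - 1)
    (colHeight D) (rowLength D)
    (a := 0) (c := x₀) (d := y₀ + 1) (b := n) (Nat.zero_le _) hy₀ ?_ ?_
    fun x _ y _ => hD.mem_iff_lt_colHeight.symm.trans hD.mem_iff_lt_rowLength
  · rw [← range_eq_Ico] at hcross
    rw [← sub_eq_iff_eq_add', hcross, mul_add_one, if_pos (by omega), if_neg (by omega), sub_zero]
  · intro x hx
    refine mem_Icc.2 ⟨hD.mem_iff_lt_colHeight.1 (hD _ _ _ _ hc (mem_Ico.1 hx).2.le le_rfl),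
      not_lt.1 fun h => ?_⟩
    simpa using hDR (hD.mem_iff_lt_colHeight.2 h)
  · intro y hy
    refine mem_Icc.2 ⟨Nat.zero_le _, not_lt.1 fun h => ha ?_⟩
    exact hD _ _ _ _ (hD.mem_iff_lt_rowLength.2 h) le_rfl (mem_Ico.1 hy).1

theorem markedCount_erase_corner (hq : 0 < q) (hD : IsYoung D) {m n : ℕ}
    (hDR : D ⊆ range m ×ˢ range n) (hc : (x₀, y₀) ∈ D) (hr : (x₀ + 1, y₀) ∉ D)
    (ha : (x₀, y₀ + 1) ∉ D) (hn : q * x₀ + p * y₀ + p + q ≤ p * n)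
    (hm : q * x₀ + p * y₀ < q * m) :
    markedCount p q m n (D.erase (x₀, y₀)) = markedCount p q m n D := by
  obtain ⟨hx₀, hy₀⟩ : x₀ < m ∧ y₀ < n := by simpa using hDR hc
  suffices (∑ c ∈ range m ×ˢ range n, ((if Marked p q D c then 1 else 0 : ℤ)
      - if Marked p q (D.erase (x₀, y₀)) c then 1 else 0)) = 0 by
    rw [sum_sub_distrib, sum_boole, sum_boole, sub_eq_zero] at this
    exact_mod_cast this.symm
  rw [sum_range_product_of_support_cross _ hx₀ hy₀ fun x y hx hy => by
      simp only [marked_erase_corner_of_ne hD hr ha hx hy, sub_self],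
    sum_congr rfl fun y hy => marked_erase_corner_below hD hc hr ha (mem_range.1 hy),
    sum_congr rfl fun y hy => marked_erase_corner_above hD hc hr ha (mem_Ico.1 hy).1,
    sum_congr rfl fun x hx => marked_erase_corner_left hD hc hr ha (mem_range.1 hx),
    sum_congr rfl fun x hx => marked_erase_corner_right hD hc hr ha (mem_Ico.1 hx).1,
    marked_erase_corner_self hq hD hc hr ha, sum_neg_distrib, sum_neg_distrib,
    hD.crossings_after_corner hq hDR hc hr hm, hD.crossings_before_corner hq hDR hc ha hn]
  ring

end Corner

theorem markedCount_eq_markedCount_empty {p q m n : ℕ} (hq : 0 < q) (hD : IsYoung D)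
    (hDR : D ⊆ range m ×ˢ range n)
    (hlevel : ∀ c ∈ D, q * c.1 + p * c.2 + p + q ≤ p * n ∧ q * c.1 + p * c.2 < q * m) :
    markedCount p q m n D = markedCount p q m n ∅ := by
  induction D using Finset.strongInduction with
  | H D ih =>
    obtain rfl | hne := D.eq_empty_or_nonempty
    · rfl
    obtain ⟨x₀, y₀, hc, hr, ha⟩ := exists_corner hne
    rw [← markedCount_erase_corner hq hD hDR hc hr ha (hlevel _ hc).1 (hlevel _ hc).2]
    exact ih _ (erase_ssubset hc) (hD.erase_corner hr ha) ((erase_subset _ _).trans hDR)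
      fun c h => hlevel c (mem_of_mem_erase h)

theorem markedCount_empty (p q m n : ℕ) :
    markedCount p q m n ∅ = #{c ∈ range m ×ˢ range n | q * c.1 + p * c.2 + p + q ≤ p * n} := by
  have hmarked (c : ℕ × ℕ) : Marked p q ∅ c ↔ q * c.1 + q ≤ p * c.2 := by
    simp [Marked, coArm, coLeg, mul_add_one]
  have hflip {y : ℕ} (hy : y < n) : p * (n - 1 - y) + p * y + p = p * n := by
    rw [← mul_add, ← mul_add_one]; congr 1; omega
  refine card_nbij' (fun c => (c.1, n - 1 - c.2)) (fun c => (c.1, n - 1 - c.2)) ?_ ?_ ?_ ?_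
  all_goals
    rintro ⟨x, y⟩ h
    simp only [coe_filter, Set.mem_ofPred_eq, mem_product, mem_range, hmarked] at h ⊢
  · have := hflip h.1.2
    exact ⟨⟨h.1.1, by omega⟩, by omega⟩
  · have := hflip h.1.2
    have := hflip (show n - 1 - y < n by omega)
    exact ⟨⟨h.1.1, by omega⟩, by omega⟩
  · simp only [Prod.mk.injEq, true_and]; omega
  · simp only [Prod.mk.injEq, true_and]; omega

theorem markedCount_eq_add {p q m n : ℕ} (hDR : D ⊆ range m ×ˢ range n) :
    markedCount p q m n D = #{c ∈ D | ¬ q * (arm D c + 1) ≤ p * leg D c}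
      + #{c ∈ range m ×ˢ range n | c ∉ D ∧ q * (coArm D c + 1) ≤ p * coLeg D c} := by
  rw [markedCount, ← card_union_of_disjoint
    (disjoint_left.2 fun c h₁ h₂ => (mem_filter.1 h₂).2.1 (mem_filter.1 h₁).1)]
  congr 1
  ext c
  by_cases h : c ∈ D
  · simp [Marked, h, hDR h]
  · simp [Marked, h]

end GorskyMazin

theorem GM_bijection_northwest_general (D : Finset (ℕ × ℕ)) (hD : IsYoung D)
    (p q K : ℕ) (hq : 0 < q)
    (hdiag : ∀ c ∈ D, q * c.1 + p * c.2 + p + q ≤ K * p * q) :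
    (D.filter fun c => q * (arm D c + 1) ≤ p * leg D c).card
      + (((Finset.range (K * p)) ×ˢ (Finset.range (K * q))).filter
          fun c => q * c.1 + p * c.2 + p + q ≤ K * p * q ∧ c ∉ D).card
      = (((Finset.range (K * p)) ×ˢ (Finset.range (K * q))).filter
          fun c => c ∉ D ∧ q * (coArm D c + 1) ≤ p * coLeg D c).card := by
  have hN : p * (K * q) = K * p * q := by ring
  have hM : q * (K * p) = K * p * q := by ring
  have hDR : D ⊆ range (K * p) ×ˢ range (K * q) := by
    intro c hc
    have := hdiag c hc
    rw [mem_product, mem_range, mem_range]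
    exact ⟨Nat.lt_of_mul_lt_mul_left (a := q) (by omega),
      Nat.lt_of_mul_lt_mul_left (a := p) (by omega)⟩
  have hlevel (c : ℕ × ℕ) (hc : c ∈ D) :
      q * c.1 + p * c.2 + p + q ≤ p * (K * q) ∧ q * c.1 + p * c.2 < q * (K * p) := by
    have := hdiag c hc
    omega
  have hcount := (GorskyMazin.markedCount_eq_markedCount_empty hq hD hDR hlevel).trans
    (GorskyMazin.markedCount_empty ..)
  rw [GorskyMazin.markedCount_eq_add hDR, hN] at hcount
  have hsplit := card_filter_add_card_filter_not (s := D) fun c => q * (arm D c + 1) ≤ p * leg D c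
  have hsub : D ⊆ {c ∈ range (K * p) ×ˢ range (K * q) | q * c.1 + p * c.2 + p + q ≤ K * p * q} :=
    fun c hc => mem_filter.2 ⟨hDR hc, hdiag c hc⟩
  have hRplus := card_sdiff_add_card_eq_card hsub
  rw [sdiff_eq_filter, filter_filter] at hRplus
  omega

theorem GM_bijection_northwest (D : Finset (ℕ × ℕ)) (hD : IsYoung D)
    (p q K : ℕ) (hp : 0 < p) (hq : 0 < q) (hK : 0 < K) (hpq : Nat.Coprime p q)
    (hdiag : ∀ c ∈ D, q * c.1 + p * c.2 + p + q ≤ K * p * q) :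
    (D.filter fun c => q * (arm D c + 1) ≤ p * leg D c).card
      + (((Finset.range (K * p)) ×ˢ (Finset.range (K * q))).filter
          fun c => q * c.1 + p * c.2 + p + q ≤ K * p * q ∧ c ∉ D).card
      = (((Finset.range (K * p)) ×ˢ (Finset.range (K * q))).filter
          fun c => c ∉ D ∧ q * (coArm D c + 1) ≤ p * coLeg D c).card :=
  GM_bijection_northwest_general D hD p q K hq hdiag
end

section
/- Let D be a Young diagram, p, q coprime positive integers, K a positive integer, P = Kp, Q = Kq, with qx + py \leq Kpq - p - q for every (x,y) \in D. Fix non-negative integers a, l with q·a \geq p·(l+1). If (P-1-a, l) \in D, then the number of boxes c \in D with a(c) = a and l(c) = l equals the number of boxes in R_{P,Q} \ D with arm a and leg l; if (P-1-a, l) \in R_{P,Q} \ D, then it is one less. -/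
namespace IRSE

lemma memg (Y : YoungDiagram) (x y : ℕ) : (x, y) ∈ Y.cells ↔ x < Y.colLen y := by
  rw [YoungDiagram.mem_cells]; exact YoungDiagram.mem_iff_lt_colLen

lemma memm (Y : YoungDiagram) (x y : ℕ) : (x, y) ∈ Y.cells ↔ y < Y.rowLen x := by
  rw [YoungDiagram.mem_cells]; exact YoungDiagram.mem_iff_lt_rowLen

lemma arm_eq (Y : YoungDiagram) (x y : ℕ) (h : (x, y) ∈ Y.cells) :
    arm Y.cells (x, y) + (x + 1) = Y.colLen y := by
  have harm : arm Y.cells (x, y) = (Y.cells.filter fun d => d.2 = y ∧ x < d.1).card := rfl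
  have hfil : (Y.cells.filter fun d => d.2 = y ∧ x < d.1)
      = (Finset.Ico (x + 1) (Y.colLen y)).image fun t => (t, y) := by
    ext ⟨u, v⟩
    simp only [Finset.mem_filter, Finset.mem_image, Finset.mem_Ico, memg, Prod.mk.injEq]
    constructor
    · rintro ⟨hu, rfl, hx⟩; exact ⟨u, ⟨hx, hu⟩, rfl, rfl⟩
    · rintro ⟨t, ⟨h1, h2⟩, rfl, rfl⟩; exact ⟨h2, rfl, h1⟩
  have hinj : Function.Injective (fun t : ℕ => (t, y)) := fun t₁ t₂ ht => by
    simpa using ht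
  have hx : x < Y.colLen y := (memg Y x y).mp h
  rw [harm, hfil, Finset.card_image_of_injective _ hinj, Nat.card_Ico]
  omega

lemma leg_eq (Y : YoungDiagram) (x y : ℕ) (h : (x, y) ∈ Y.cells) :
    leg Y.cells (x, y) + (y + 1) = Y.rowLen x := by
  have hleg : leg Y.cells (x, y) = (Y.cells.filter fun d => d.1 = x ∧ y < d.2).card := rfl
  have hfil : (Y.cells.filter fun d => d.1 = x ∧ y < d.2)
      = (Finset.Ico (y + 1) (Y.rowLen x)).image fun t => (x, t) := by
    ext ⟨u, v⟩
    simp only [Finset.mem_filter, Finset.mem_image, Finset.mem_Ico, memm, Prod.mk.injEq]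
    constructor
    · rintro ⟨hu, rfl, hx⟩; exact ⟨v, ⟨hx, hu⟩, rfl, rfl⟩
    · rintro ⟨t, ⟨h1, h2⟩, rfl, rfl⟩; exact ⟨h2, rfl, h1⟩
  have hinj : Function.Injective (fun t : ℕ => (x, t)) := fun t₁ t₂ ht => by
    simpa using ht
  have hy : y < Y.rowLen x := (memm Y x y).mp h
  rw [hleg, hfil, Finset.card_image_of_injective _ hinj, Nat.card_Ico]
  omega

lemma coArm_eq (Y : YoungDiagram) (x y : ℕ) (h : Y.colLen y ≤ x) :
    coArm Y.cells (x, y) + Y.colLen y = x := by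
  have e : coArm Y.cells (x, y) = ((Finset.range x).filter fun x' => (x', y) ∉ Y.cells).card := rfl
  have hfil : ((Finset.range x).filter fun x' => (x', y) ∉ Y.cells)
      = Finset.Ico (Y.colLen y) x := by
    ext t
    simp only [Finset.mem_filter, Finset.mem_range, Finset.mem_Ico, memg, not_lt]
    omega
  rw [e, hfil, Nat.card_Ico]
  omega

lemma coLeg_eq (Y : YoungDiagram) (x y : ℕ) (h : Y.rowLen x ≤ y) :
    coLeg Y.cells (x, y) + Y.rowLen x = y := by
  have e : coLeg Y.cells (x, y) = ((Finset.range y).filter fun y' => (x, y') ∉ Y.cells).card := rfl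
  have hfil : ((Finset.range y).filter fun y' => (x, y') ∉ Y.cells)
      = Finset.Ico (Y.rowLen x) y := by
    ext t
    simp only [Finset.mem_filter, Finset.mem_range, Finset.mem_Ico, memm, not_lt]
    omega
  rw [e, hfil, Nat.card_Ico]
  omega

lemma telescope (B C : ℕ → Prop) [DecidablePred B] [DecidablePred C]
    (hbc : ∀ y, (B y ↔ B (y + 1)) ∨ C y) :
    ∀ N : ℕ, ((Finset.range N).filter fun y => B y ∧ C y).card + (if B N then 1 else 0)
      = ((Finset.range N).filter fun y => B (y + 1) ∧ C y).card + (if B 0 then 1 else 0) := by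
  intro N
  induction N with
  | zero => simp
  | succ n ih =>
    rw [Finset.range_add_one, Finset.filter_insert, Finset.filter_insert]
    have hn : n ∉ Finset.range n := by simp
    have hx := hbc n
    by_cases hB : B n <;> by_cases hB1 : B (n + 1) <;> by_cases hC : C n <;>
      simp [hB, hB1, hC, Finset.card_insert_of_notMem hn] at hx ih ⊢ <;> omega

end IRSE

theorem inside_rectangle_southeast (D : Finset (ℕ × ℕ)) (hD : IsYoung D)
    (p q K : ℕ) (hp : 0 < p) (hq : 0 < q) (hK : 0 < K) (hpq : Nat.Coprime p q)
    (hdiag : ∀ c ∈ D, q * c.1 + p * c.2 + p + q ≤ K * p * q)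
    (a l : ℕ) (ha : a < K * p) (hl : l < K * q)
    (hslope : p * (l + 1) ≤ q * a) :
    ((K * p - 1 - a, l) ∈ D →
      (D.filter fun c => arm D c = a ∧ leg D c = l).card
        = (((Finset.range (K * p)) ×ˢ (Finset.range (K * q))).filter
            fun c => c ∉ D ∧ coArm D c = a ∧ coLeg D c = l).card) ∧
    ((K * p - 1 - a, l) ∉ D →
      (D.filter fun c => arm D c = a ∧ leg D c = l).card + 1
        = (((Finset.range (K * p)) ×ˢ (Finset.range (K * q))).filter
            fun c => c ∉ D ∧ coArm D c = a ∧ coLeg D c = l).card) := by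
  classical
  have hLS : IsLowerSet (↑D : Set (ℕ × ℕ)) := by
    intro c d hle hc
    exact hD c.1 c.2 d.1 d.2 hc hle.1 hle.2
  -- package the boundary profile functions
  obtain ⟨g, m, hmemg, hmemm, hganti, harm, hleg, hcoArm, hcoLeg⟩ :
      ∃ g m : ℕ → ℕ,
        (∀ x y, (x, y) ∈ D ↔ x < g y) ∧
        (∀ x y, (x, y) ∈ D ↔ y < m x) ∧
        (∀ y1 y2 : ℕ, y1 ≤ y2 → g y2 ≤ g y1) ∧
        (∀ x y, (x, y) ∈ D → arm D (x, y) + (x + 1) = g y) ∧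
        (∀ x y, (x, y) ∈ D → leg D (x, y) + (y + 1) = m x) ∧
        (∀ x y, g y ≤ x → coArm D (x, y) + g y = x) ∧
        (∀ x y, m x ≤ y → coLeg D (x, y) + m x = y) := by
    refine ⟨(YoungDiagram.mk D hLS).colLen, (YoungDiagram.mk D hLS).rowLen,
      fun x y => IRSE.memg (YoungDiagram.mk D hLS) x y,
      fun x y => IRSE.memm (YoungDiagram.mk D hLS) x y,
      fun y1 y2 h => (YoungDiagram.mk D hLS).colLen_anti y1 y2 h,
      fun x y h => IRSE.arm_eq (YoungDiagram.mk D hLS) x y h,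
      fun x y h => IRSE.leg_eq (YoungDiagram.mk D hLS) x y h,
      fun x y h => IRSE.coArm_eq (YoungDiagram.mk D hLS) x y h,
      fun x y h => IRSE.coLeg_eq (YoungDiagram.mk D hLS) x y h⟩
  have hrect : ∀ c ∈ D, c.1 < K * p ∧ c.2 < K * q := by
    intro c hc
    have hd := hdiag c hc
    constructor
    · have h1 : q * (c.1 + 1) ≤ q * (K * p) := by
        have e1 : q * (c.1 + 1) = q * c.1 + q := by ring
        have e2 : q * (K * p) = K * p * q := by ring
        omega
      have := Nat.le_of_mul_le_mul_left h1 hq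
      omega
    · have h1 : p * (c.2 + 1) ≤ p * (K * q) := by
        have e1 : p * (c.2 + 1) = p * c.2 + p := by ring
        have e2 : p * (K * q) = K * p * q := by ring
        omega
      have := Nat.le_of_mul_le_mul_left h1 hp
      omega
  have ha1 : 1 ≤ a := by
    rcases Nat.eq_zero_or_pos a with h0 | h0
    · exfalso
      rw [h0, Nat.mul_zero] at hslope
      have : 0 < p * (l + 1) := Nat.mul_pos hp (by omega)
      omega
    · exact h0
  have hglt : ∀ y : ℕ, g y < K * p := by
    intro y
    rcases Nat.eq_zero_or_pos (g y) with h0 | h0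
    · have := Nat.mul_pos hK hp; omega
    · obtain ⟨s, hs⟩ : ∃ s, g y = s + 1 := ⟨g y - 1, by omega⟩
      have hx : (s, y) ∈ D := (hmemg s y).mpr (by omega)
      have hd := hdiag _ hx
      simp only at hd
      have h1 : q * (s + 1) < q * (K * p) := by
        have e1 : q * (s + 1) = q * s + q := by ring
        have e2 : q * (K * p) = K * p * q := by ring
        omega
      have := Nat.lt_of_mul_lt_mul_left h1
      omega
  have hgQ : g (K * q) = 0 := by
    by_contra h0
    have hmem : (0, K * q) ∈ D := (hmemg 0 (K * q)).mpr (by omega)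
    have := (hrect _ hmem).2
    simp only at this
    omega
  -- Step 1: inside count
  have key1 : (D.filter fun c => arm D c = a ∧ leg D c = l).card
      = ((Finset.range (K * q)).filter fun y =>
          g y ≤ g (y + l) + a ∧ g (y + 1 + l) + a < g y).card := by
    refine Finset.card_bij' (fun c _ => c.2) (fun y _ => (g y - a - 1, y)) ?_ ?_ ?_ ?_
    · intro c hc
      simp only [Finset.mem_filter] at hc
      obtain ⟨hcD, ha', hl'⟩ := hc
      obtain ⟨x, y⟩ := c
      have e1 := harm x y hcD
      rw [ha'] at e1
      have e2 := hleg x y hcD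
      rw [hl'] at e2
      have hyQ : y < K * q := (hrect _ hcD).2
      have hmem1 : (x, y + l) ∈ D := (hmemm x (y + l)).mpr (by omega)
      have hx1 : x < g (y + l) := (hmemg x (y + l)).mp hmem1
      have hx2 : ¬ x < g (y + 1 + l) := by
        intro hcon
        have := (hmemm x (y + 1 + l)).mp ((hmemg x (y + 1 + l)).mpr hcon)
        omega
      simp only [Finset.mem_filter, Finset.mem_range]
      exact ⟨hyQ, by omega, by omega⟩
    · intro y hy
      simp only [Finset.mem_filter, Finset.mem_range] at hy
      obtain ⟨hyQ, hB, hC⟩ := hy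
      have hxD : (g y - a - 1, y) ∈ D := (hmemg _ y).mpr (by omega)
      have e1 := harm _ y hxD
      have hm1 : y + l < m (g y - a - 1) :=
        (hmemm _ (y + l)).mp ((hmemg _ (y + l)).mpr (by omega))
      have hm2 : ¬ (y + 1 + l < m (g y - a - 1)) := by
        intro hcon
        have := (hmemg _ (y + 1 + l)).mp ((hmemm _ (y + 1 + l)).mpr hcon)
        omega
      have e2 := hleg _ y hxD
      simp only [Finset.mem_filter]
      exact ⟨hxD, by omega, by omega⟩
    · intro c hc
      simp only [Finset.mem_filter] at hc
      obtain ⟨hcD, ha', hl'⟩ := hc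
      obtain ⟨x, y⟩ := c
      have e1 := harm x y hcD
      rw [ha'] at e1
      simp only [Prod.mk.injEq]
      exact ⟨by omega, trivial⟩
    · intro y hy
      rfl
  -- Step 2: outside count, indexed by rows
  have key2 : (((Finset.range (K * p)) ×ˢ (Finset.range (K * q))).filter
          fun c => c ∉ D ∧ coArm D c = a ∧ coLeg D c = l).card
      = ((Finset.range (K * q)).filter fun y =>
          g y + a < K * p ∧ m (g y + a) + l = y).card := by
    refine Finset.card_bij' (fun c _ => c.2) (fun y _ => (g y + a, y)) ?_ ?_ ?_ ?_
    · intro c hc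
      simp only [Finset.mem_filter, Finset.mem_product, Finset.mem_range] at hc
      obtain ⟨⟨hxP, hyQ⟩, hnD, hca, hcl⟩ := hc
      obtain ⟨x, y⟩ := c
      have hglex : g y ≤ x := by
        by_contra hcon
        exact hnD ((hmemg x y).mpr (by omega))
      have e1 := hcoArm x y hglex
      rw [hca] at e1
      have hmley : m x ≤ y := by
        by_contra hcon
        exact hnD ((hmemm x y).mpr (by omega))
      have e2 := hcoLeg x y hmley
      rw [hcl] at e2
      simp only [Finset.mem_filter, Finset.mem_range]
      have hxeq : g y + a = x := by omega
      rw [hxeq]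
      exact ⟨hyQ, by omega, by omega⟩
    · intro y hy
      simp only [Finset.mem_filter, Finset.mem_range] at hy
      obtain ⟨hyQ, hlt, hml⟩ := hy
      have hnD : (g y + a, y) ∉ D := by
        intro hcon
        have := (hmemg _ _).mp hcon
        omega
      have e1 := hcoArm (g y + a) y (by omega)
      have e2 := hcoLeg (g y + a) y (by omega)
      simp only [Finset.mem_filter, Finset.mem_product, Finset.mem_range]
      exact ⟨⟨hlt, hyQ⟩, hnD, by omega, by omega⟩
    · intro c hc
      simp only [Finset.mem_filter, Finset.mem_product, Finset.mem_range] at hc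
      obtain ⟨⟨hxP, hyQ⟩, hnD, hca, hcl⟩ := hc
      obtain ⟨x, y⟩ := c
      have hglex : g y ≤ x := by
        by_contra hcon
        exact hnD ((hmemg x y).mpr (by omega))
      have e1 := hcoArm x y hglex
      rw [hca] at e1
      simp only [Prod.mk.injEq]
      exact ⟨by omega, trivial⟩
    · intro y hy
      rfl
  -- Step 3: split off the row y = l
  have key3 : ((Finset.range (K * q)).filter fun y =>
          g y + a < K * p ∧ m (g y + a) + l = y).card
      = (((Finset.range (K * q)).filter fun y =>
          g y + a < K * p ∧ m (g y + a) + l = y).filter fun y => l < y).card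
        + (if g l + a < K * p ∧ m (g l + a) + l = l then 1 else 0) := by
    have hsp := Finset.card_filter_add_card_filter_not
      (s := (Finset.range (K * q)).filter fun y => g y + a < K * p ∧ m (g y + a) + l = y)
      (p := fun y => l < y)
    by_cases hOl : g l + a < K * p ∧ m (g l + a) + l = l
    · have hone : (((Finset.range (K * q)).filter fun y =>
            g y + a < K * p ∧ m (g y + a) + l = y).filter fun y => ¬ l < y) = {l} := by
        ext z
        simp only [Finset.mem_filter, Finset.mem_range, Finset.mem_singleton, not_lt]
        constructor
        · rintro ⟨⟨hzQ, h1, h2⟩, hzl⟩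
          omega
        · rintro rfl
          exact ⟨⟨hl, hOl.1, hOl.2⟩, le_refl _⟩
      rw [if_pos hOl]
      rw [hone] at hsp
      simp only [Finset.card_singleton] at hsp
      omega
    · have hzero : (((Finset.range (K * q)).filter fun y =>
            g y + a < K * p ∧ m (g y + a) + l = y).filter fun y => ¬ l < y) = ∅ := by
        ext z
        simp only [Finset.mem_filter, Finset.mem_range, Finset.notMem_empty, iff_false, not_lt,
          not_and]
        rintro ⟨hzQ, h1, h2⟩ hzl
        have hz : z = l := by omega
        subst hz
        exact hOl ⟨h1, h2⟩
      rw [if_neg hOl]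
      rw [hzero] at hsp
      simp only [Finset.card_empty] at hsp
      omega
  -- Step 4: shift the remaining rows by l+1
  have key4 : (((Finset.range (K * q)).filter fun y =>
          g y + a < K * p ∧ m (g y + a) + l = y).filter fun y => l < y).card
      = ((Finset.range (K * q)).filter fun z =>
          g (z + 1) ≤ g (z + 1 + l) + a ∧ g (z + 1 + l) + a < g z).card := by
    refine Finset.card_bij' (fun y _ => y - (l + 1)) (fun z _ => z + 1 + l) ?_ ?_ ?_ ?_
    · intro y hy
      simp only [Finset.mem_filter, Finset.mem_range] at hy
      obtain ⟨⟨hyQ, h1, h2⟩, hly⟩ := hy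
      obtain ⟨z, rfl⟩ : ∃ z, y = z + 1 + l := ⟨y - 1 - l, by omega⟩
      have hmz : m (g (z + 1 + l) + a) = z + 1 := by omega
      have hd1 : (g (z + 1 + l) + a, z) ∈ D := (hmemm _ z).mpr (by omega)
      have hlt1 : g (z + 1 + l) + a < g z := (hmemg _ z).mp hd1
      have hd2 : (g (z + 1 + l) + a, z + 1) ∉ D := by
        intro hcon
        have := (hmemm _ (z + 1)).mp hcon
        omega
      have hle2 : ¬ (g (z + 1 + l) + a < g (z + 1)) := by
        intro hcon
        exact hd2 ((hmemg _ (z + 1)).mpr hcon)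
      simp only [Finset.mem_filter, Finset.mem_range]
      have hz : z + 1 + l - (l + 1) = z := by omega
      rw [hz]
      exact ⟨by omega, by omega, hlt1⟩
    · intro z hz
      simp only [Finset.mem_filter, Finset.mem_range] at hz
      obtain ⟨hzQ, hB1, hC⟩ := hz
      have hgz : a + 1 ≤ g z := by omega
      have hcell : (g z - 1, z) ∈ D := (hmemg _ z).mpr (by omega)
      have hd := hdiag _ hcell
      simp only at hd
      have hqa : q * a ≤ q * (g z - 1) := Nat.mul_le_mul le_rfl (show a ≤ g z - 1 by omega)
      have hfin : p * (z + 1 + l) < p * (K * q) := by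
        have e1 : p * (z + 1 + l) = p * (l + 1) + p * z := by ring
        have e2 : p * (K * q) = K * p * q := by ring
        omega
      have hzQ' := Nat.lt_of_mul_lt_mul_left hfin
      -- the cell (g (z+1+l) + a, z+1+l)
      have hd1 : (g (z + 1 + l) + a, z) ∈ D := (hmemg _ z).mpr (by omega)
      have hml : z < m (g (z + 1 + l) + a) := (hmemm _ z).mp hd1
      have hmr : ¬ (z + 1 < m (g (z + 1 + l) + a)) := by
        intro hcon
        have := (hmemg _ (z + 1)).mp ((hmemm _ (z + 1)).mpr hcon)
        omega
      simp only [Finset.mem_filter, Finset.mem_range]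
      refine ⟨⟨hzQ', ?_, ?_⟩, by omega⟩
      · have := hglt z
        omega
      · omega
    · intro y hy
      simp only [Finset.mem_filter, Finset.mem_range] at hy
      show y - (l + 1) + 1 + l = y
      omega
    · intro z hz
      show z + 1 + l - (l + 1) = z
      omega
  -- Step 5: telescoping
  have hbc : ∀ y, ((fun y => g y ≤ g (y + l) + a) y ↔ (fun y => g y ≤ g (y + l) + a) (y + 1))
      ∨ (fun y => g (y + 1 + l) + a < g y) y := by
    intro y
    have e1 : g (y + 1) ≤ g y := hganti y (y + 1) (by omega)
    have e2 : g (y + 1 + l) ≤ g (y + l) := hganti (y + l) (y + 1 + l) (by omega)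
    simp only
    omega
  have tel : ((Finset.range (K * q)).filter fun y =>
        g y ≤ g (y + l) + a ∧ g (y + 1 + l) + a < g y).card
      + (if g (K * q) ≤ g (K * q + l) + a then 1 else 0)
    = ((Finset.range (K * q)).filter fun y =>
        g (y + 1) ≤ g (y + 1 + l) + a ∧ g (y + 1 + l) + a < g y).card
      + (if g 0 ≤ g (0 + l) + a then 1 else 0) :=
    IRSE.telescope (fun y => g y ≤ g (y + l) + a) (fun y => g (y + 1 + l) + a < g y)
      hbc (K * q)
  rw [Nat.zero_add] at tel
  have hBQ : g (K * q) ≤ g (K * q + l) + a := by omega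
  rw [if_pos hBQ] at tel
  -- m (g l + a) = 0 ↔ g 0 ≤ g l + a
  have hm0 : m (g l + a) = 0 ↔ g 0 ≤ g l + a := by
    constructor
    · intro h0
      by_contra hcon
      have hmem0 : (g l + a, 0) ∈ D := (hmemg _ 0).mpr (by omega)
      have := (hmemm _ 0).mp hmem0
      omega
    · intro hge
      by_contra h0
      have hmem0 : (g l + a, 0) ∈ D := (hmemm _ 0).mpr (by omega)
      have := (hmemg _ 0).mp hmem0
      omega
  constructor
  · intro hin
    have hgl : K * p - 1 - a < g l := (hmemg _ _).mp hin
    have hPle : K * p ≤ g l + a := by omega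
    have hifneg : ¬ (g l + a < K * p ∧ m (g l + a) + l = l) := fun hcon => by omega
    rw [if_neg hifneg] at key3
    have hB0 : g 0 ≤ g l + a := by
      have := hglt 0
      omega
    rw [if_pos hB0] at tel
    rw [key1, key2, key3, key4]
    omega
  · intro hin
    have hgl : ¬ (K * p - 1 - a < g l) := fun hcon => hin ((hmemg _ _).mpr hcon)
    have hlt : g l + a < K * p := by omega
    by_cases hB0 : g 0 ≤ g l + a
    · rw [if_pos hB0] at tel
      have hifpos : g l + a < K * p ∧ m (g l + a) + l = l := by
        have := hm0.mpr hB0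
        omega
      rw [if_pos hifpos] at key3
      rw [key1, key2, key3, key4]
      omega
    · rw [if_neg hB0] at tel
      have hifneg : ¬ (g l + a < K * p ∧ m (g l + a) + l = l) := by
        intro hcon
        exact hB0 (hm0.mp (by omega))
      rw [if_neg hifneg] at key3
      rw [key1, key2, key3, key4]
      omega
end

section
/- Let D be a Young diagram, p, q coprime positive integers, K a positive integer, P = Kp, Q = Kq, with qx + py \leq Kpq - p - q for every (x,y) \in D. Then |{c \in D : q·a(c) \geq p·(l(c)+1)}| + |R^+_{P,Q} \ D| = |{c' \in R_{P,Q} \ D : q·a(c') \geq p·(l(c')+1)}|, where R^+_{P,Q} = {(x,y) \in (Z_{\geq 0})^2 : qx + py \leq Kpq - p - q}. -/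
open Finset

theorem Finset.range_filter_lt {m n : ℕ} (h : m ≤ n) : {x ∈ range n | x < m} = range m := by
  ext x
  simp only [mem_filter, mem_range]
  omega

theorem Finset.sum_sub_sum_eq_sub_of_eq_of_ne {ι M : Type*} [AddCommGroup M] {s : Finset ι}
    {f g : ι → M} {a : ι} (ha : a ∈ s) (h : ∀ b ∈ s, b ≠ a → f b = g b) :
    ∑ b ∈ s, f b - ∑ b ∈ s, g b = f a - g a := by
  rw [← sum_sub_distrib]
  exact sum_eq_single_of_mem a ha fun b hb hne => by rw [h b hb hne, sub_self]

theorem Finset.sum_product_range_eq_of_eq_zero_off_cross {M : Type*} [AddCommGroup M]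
    {P Q x₀ y₀ : ℕ} (F : ℕ × ℕ → M) (hx₀ : x₀ < P) (hy₀ : y₀ < Q)
    (hF : ∀ x y, x ≠ x₀ → y ≠ y₀ → F (x, y) = 0) :
    ∑ c ∈ range P ×ˢ range Q, F c
      = ∑ y ∈ range Q, F (x₀, y) + ∑ x ∈ range P, F (x, y₀) - F (x₀, y₀) := by
  rw [sum_product, ← add_sum_erase _ _ (mem_range.2 hx₀),
    ← add_sum_erase (range P) (fun x => F (x, y₀)) (mem_range.2 hx₀),
    sum_congr rfl fun x hx => sum_eq_single_of_mem y₀ (mem_range.2 hy₀)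
      fun y _ hy => hF x y (ne_of_mem_erase hx) hy]
  abel

theorem sum_range_ite_mul_mem_Ico {q a P : ℕ} (hq : 0 < q) (h : a + q ≤ q * P) :
    ∑ x ∈ range P, (if a ≤ q * x ∧ q * x < a + q then (1 : ℤ) else 0) = 1 := by
  rw [← natCast_card_filter, card_eq_one.2 ⟨(a + q - 1) / q, ?_⟩, Nat.cast_one]
  ext x
  rw [mem_filter, mem_range, mem_singleton, eq_comm, Nat.div_eq_iff hq, mul_comm x]
  constructor
  · rintro ⟨-, h₁, h₂⟩
    omega
  · rintro ⟨h₁, h₂⟩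
    exact ⟨Nat.lt_of_mul_lt_mul_left (a := q) (by omega), by omega, by omega⟩

def colLen (D : Finset (ℕ × ℕ)) (x : ℕ) : ℕ := #{d ∈ D | d.1 = x}

def rowLen (D : Finset (ℕ × ℕ)) (y : ℕ) : ℕ := #{d ∈ D | d.2 = y}

theorem colLen_erase_add_one {D : Finset (ℕ × ℕ)} {c : ℕ × ℕ} (h : c ∈ D) :
    colLen (D.erase c) c.1 + 1 = colLen D c.1 := by
  rw [colLen, colLen, filter_erase,
    card_erase_add_one (s := {d ∈ D | d.1 = c.1}) (mem_filter.2 ⟨h, rfl⟩)]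

theorem rowLen_erase_add_one {D : Finset (ℕ × ℕ)} {c : ℕ × ℕ} (h : c ∈ D) :
    rowLen (D.erase c) c.2 + 1 = rowLen D c.2 := by
  rw [rowLen, rowLen, filter_erase,
    card_erase_add_one (s := {d ∈ D | d.2 = c.2}) (mem_filter.2 ⟨h, rfl⟩)]

theorem colLen_erase_of_ne {D : Finset (ℕ × ℕ)} {c : ℕ × ℕ} {x : ℕ} (hx : x ≠ c.1) :
    colLen (D.erase c) x = colLen D x := by
  rw [colLen, colLen, filter_erase, erase_eq_of_notMem fun h => hx (mem_filter.1 h).2.symm]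

theorem rowLen_erase_of_ne {D : Finset (ℕ × ℕ)} {c : ℕ × ℕ} {y : ℕ} (hy : y ≠ c.2) :
    rowLen (D.erase c) y = rowLen D y := by
  rw [rowLen, rowLen, filter_erase, erase_eq_of_notMem fun h => hy (mem_filter.1 h).2.symm]

theorem colLen_filter_fst_lt {D : Finset (ℕ × ℕ)} {n x : ℕ} (hx : x < n) :
    colLen {d ∈ D | d.1 < n} x = colLen D x := by
  rw [colLen, colLen, filter_filter]
  exact congrArg card (filter_congr fun d _ => and_iff_right_of_imp fun h => h ▸ hx)

namespace IsYoung

variable {D : Finset (ℕ × ℕ)}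

theorem arm_add_succ (hD : IsYoung D) {x y : ℕ} (h : (x, y) ∈ D) :
    arm D (x, y) + (x + 1) = rowLen D y := by
  have hleft : {d ∈ D | d.2 = y ∧ ¬x < d.1} = (range (x + 1)).image (·, y) := by
    ext ⟨a, b⟩
    simp only [mem_filter, mem_image, mem_range, Prod.mk.injEq, not_lt]
    constructor
    · rintro ⟨-, rfl, ha⟩
      exact ⟨a, by omega, rfl, rfl⟩
    · rintro ⟨a, ha, rfl, rfl⟩
      exact ⟨hD _ _ _ _ h (by omega) le_rfl, rfl, by omega⟩
  rw [arm, rowLen, ← card_filter_add_card_filter_not (s := {d ∈ D | d.2 = y}) (x < ·.1),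
    filter_filter, filter_filter, hleft, card_image_of_injective _ (Prod.mk_left_injective y),
    card_range]

theorem leg_add_succ (hD : IsYoung D) {x y : ℕ} (h : (x, y) ∈ D) :
    leg D (x, y) + (y + 1) = colLen D x := by
  have hbelow : {d ∈ D | d.1 = x ∧ ¬y < d.2} = (range (y + 1)).image (x, ·) := by
    ext ⟨a, b⟩
    simp only [mem_filter, mem_image, mem_range, Prod.mk.injEq, not_lt]
    constructor
    · rintro ⟨-, rfl, hb⟩
      exact ⟨b, by omega, rfl, rfl⟩
    · rintro ⟨b, hb, rfl, rfl⟩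
      exact ⟨hD _ _ _ _ h le_rfl (by omega), rfl, by omega⟩
  rw [leg, colLen, ← card_filter_add_card_filter_not (s := {d ∈ D | d.1 = x}) (y < ·.2),
    filter_filter, filter_filter, hbelow, card_image_of_injective _ (Prod.mk_right_injective x),
    card_range]

theorem coArm_add_rowLen (hD : IsYoung D) {x y : ℕ} (h : (x, y) ∉ D) :
    coArm D (x, y) + rowLen D y = x := by
  have hrow : {d ∈ D | d.2 = y} = {x' ∈ range x | (x', y) ∈ D}.image (·, y) := by
    ext ⟨a, b⟩
    simp only [mem_filter, mem_image, mem_range, Prod.mk.injEq]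
    constructor
    · rintro ⟨hab, rfl⟩
      refine ⟨a, ⟨?_, hab⟩, rfl, rfl⟩
      by_contra! hxa
      exact h (hD _ _ _ _ hab hxa le_rfl)
    · rintro ⟨a, ⟨-, ha⟩, rfl, rfl⟩
      exact ⟨ha, rfl⟩
  rw [rowLen, hrow, card_image_of_injective _ (Prod.mk_left_injective y), coArm, add_comm,
    card_filter_add_card_filter_not, card_range]

theorem coLeg_add_colLen (hD : IsYoung D) {x y : ℕ} (h : (x, y) ∉ D) :
    coLeg D (x, y) + colLen D x = y := by
  have hcol : {d ∈ D | d.1 = x} = {y' ∈ range y | (x, y') ∈ D}.image (x, ·) := by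
    ext ⟨a, b⟩
    simp only [mem_filter, mem_image, mem_range, Prod.mk.injEq]
    constructor
    · rintro ⟨hab, rfl⟩
      refine ⟨b, ⟨?_, hab⟩, rfl, rfl⟩
      by_contra! hyb
      exact h (hD _ _ _ _ hab le_rfl hyb)
    · rintro ⟨b, ⟨-, hb⟩, rfl, rfl⟩
      exact ⟨hb, rfl⟩
  rw [colLen, hcol, card_image_of_injective _ (Prod.mk_right_injective x), coLeg, add_comm,
    card_filter_add_card_filter_not, card_range]

theorem mem_iff_lt_rowLen (hD : IsYoung D) {x y : ℕ} : (x, y) ∈ D ↔ x < rowLen D y := by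
  constructor
  · intro h
    have := hD.arm_add_succ h
    omega
  · intro h
    by_contra h'
    have := hD.coArm_add_rowLen h'
    omega

theorem mem_iff_lt_colLen (hD : IsYoung D) {x y : ℕ} : (x, y) ∈ D ↔ y < colLen D x := by
  constructor
  · intro h
    have := hD.leg_add_succ h
    omega
  · intro h
    by_contra h'
    have := hD.coLeg_add_colLen h'
    omega

theorem rowLen_eq (hD : IsYoung D) {y n : ℕ} (h : ∀ x, (x, y) ∈ D ↔ x < n) : rowLen D y = n :=
  eq_of_forall_lt_iff fun x => by rw [← h, hD.mem_iff_lt_rowLen]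

theorem filter_fst_lt (hD : IsYoung D) (n : ℕ) : IsYoung {d ∈ D | d.1 < n} := by
  intro x y x' y' h hx hy
  rw [mem_filter] at h ⊢
  exact ⟨hD x y x' y' h.1 hx hy, lt_of_le_of_lt hx h.2⟩

theorem rowLen_filter_fst_lt (hD : IsYoung D) (n y : ℕ) :
    rowLen {d ∈ D | d.1 < n} y = min (rowLen D y) n :=
  (hD.filter_fst_lt n).rowLen_eq fun x => by rw [mem_filter, hD.mem_iff_lt_rowLen, lt_min_iff]

end IsYoung

structure IsLastColumnTop (D : Finset (ℕ × ℕ)) (x y : ℕ) : Prop where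
  mem : (x, y) ∈ D
  not_mem_right : (x + 1, 0) ∉ D
  not_mem_above : (x, y + 1) ∉ D

namespace IsYoung

variable {D : Finset (ℕ × ℕ)} {x₀ y₀ : ℕ}

theorem exists_isLastColumnTop (hD : IsYoung D) (hne : D.Nonempty) :
    ∃ x y, IsLastColumnTop D x y := by
  obtain ⟨⟨a, b⟩, hab⟩ := hne
  have h₀ : 0 < rowLen D 0 :=
    hD.mem_iff_lt_rowLen.1 (hD _ _ _ _ hab (Nat.zero_le a) (Nat.zero_le b))
  set x := rowLen D 0 - 1
  have hx : 0 < colLen D x := hD.mem_iff_lt_colLen.1 (hD.mem_iff_lt_rowLen.2 (by omega))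
  refine ⟨x, colLen D x - 1, hD.mem_iff_lt_colLen.2 (by omega), ?_, ?_⟩
  · rw [hD.mem_iff_lt_rowLen]
    omega
  · rw [hD.mem_iff_lt_colLen]
    omega

theorem erase_isLastColumnTop (hD : IsYoung D) (hc : IsLastColumnTop D x₀ y₀) :
    IsYoung (D.erase (x₀, y₀)) := by
  intro x y x' y' h hx hy
  obtain ⟨hne, h⟩ := mem_erase.1 h
  refine mem_erase.2 ⟨?_, hD x y x' y' h hx hy⟩
  rintro ⟨⟩
  rcases Nat.lt_or_ge x₀ x with hlt | hle
  · exact hc.not_mem_right (hD x y _ _ h hlt (Nat.zero_le y))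
  · exact hc.not_mem_above (hD x y _ _ h hx (by grind))

@[elab_as_elim]
theorem induction_on_lastColumnTop {motive : Finset (ℕ × ℕ) → Prop} (empty : motive ∅)
    (erase : ∀ D x y, IsYoung D → IsLastColumnTop D x y → motive (D.erase (x, y)) → motive D)
    (D : Finset (ℕ × ℕ)) (hD : IsYoung D) : motive D := by
  induction D using Finset.strongInduction with
  | H D ih =>
    rcases D.eq_empty_or_nonempty with rfl | hne
    · exact empty
    obtain ⟨x, y, hc⟩ := hD.exists_isLastColumnTop hne
    exact erase D x y hD hc (ih _ (erase_ssubset hc.mem) (hD.erase_isLastColumnTop hc))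

theorem colLen_of_isLastColumnTop (hD : IsYoung D) (hc : IsLastColumnTop D x₀ y₀) :
    colLen D x₀ = y₀ + 1 := by
  have := hD.mem_iff_lt_colLen.1 hc.mem
  have := mt hD.mem_iff_lt_colLen.2 hc.not_mem_above
  omega

theorem colLen_eq_zero_of_isLastColumnTop (hD : IsYoung D) (hc : IsLastColumnTop D x₀ y₀)
    {x : ℕ} (hx : x₀ < x) : colLen D x = 0 := by
  by_contra h
  exact hc.not_mem_right (hD x 0 _ _ (hD.mem_iff_lt_colLen.2 (by omega)) hx le_rfl)

theorem lt_colLen_of_isLastColumnTop (hD : IsYoung D) (hc : IsLastColumnTop D x₀ y₀)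
    {x : ℕ} (hx : x ≤ x₀) : y₀ < colLen D x :=
  hD.mem_iff_lt_colLen.1 (hD _ _ _ _ hc.mem hx le_rfl)

theorem rowLen_of_isLastColumnTop (hD : IsYoung D) (hc : IsLastColumnTop D x₀ y₀)
    {y : ℕ} (hy : y ≤ y₀) : rowLen D y = x₀ + 1 := by
  have := hD.mem_iff_lt_rowLen.1 (hD _ _ _ _ hc.mem le_rfl hy)
  have := mt hD.mem_iff_lt_rowLen.2 fun h => hc.not_mem_right (hD _ y _ _ h le_rfl (Nat.zero_le y))
  omega

theorem rowLen_le_of_isLastColumnTop (hD : IsYoung D) (hc : IsLastColumnTop D x₀ y₀)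
    {y : ℕ} (hy : y₀ < y) : rowLen D y ≤ x₀ := by
  by_contra! h
  exact hc.not_mem_above (hD _ _ _ _ (hD.mem_iff_lt_rowLen.2 h) le_rfl hy)

theorem colLen_erase_of_isLastColumnTop (hD : IsYoung D) (hc : IsLastColumnTop D x₀ y₀) :
    colLen (D.erase (x₀, y₀)) x₀ = y₀ := by
  have : colLen (D.erase (x₀, y₀)) x₀ + 1 = colLen D x₀ := colLen_erase_add_one hc.mem
  rw [hD.colLen_of_isLastColumnTop hc] at this
  omega

theorem rowLen_erase_of_isLastColumnTop (hD : IsYoung D) (hc : IsLastColumnTop D x₀ y₀) :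
    rowLen (D.erase (x₀, y₀)) y₀ = x₀ := by
  have : rowLen (D.erase (x₀, y₀)) y₀ + 1 = rowLen D y₀ := rowLen_erase_add_one hc.mem
  rw [hD.rowLen_of_isLastColumnTop hc le_rfl] at this
  omega

theorem sum_boundary_telescope {M : Type*} [AddCommGroup M] (g : ℕ → ℕ → M) {P Q : ℕ}
    (hD : IsYoung D) (hDR : D ⊆ range P ×ˢ range Q) :
    ∑ x ∈ range P, (g (x + 1) (colLen D x) - g x (colLen D x))
      + ∑ y ∈ range Q, (g (rowLen D y) y - g (rowLen D y) (y + 1)) = g P 0 - g 0 Q := by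
  revert hDR
  refine induction_on_lastColumnTop ?_ (fun D x₀ y₀ hD hc ih hDR => ?_) D hD
  · intro
    simp only [colLen, rowLen, filter_empty, card_empty]
    rw [sum_range_sub (g · 0), sum_range_sub' (g 0 ·)]
    abel
  · have hmem := mem_product.1 (hDR hc.mem)
    rw [← ih ((erase_subset _ _).trans hDR), ← sub_eq_zero, add_sub_add_comm,
      sum_sub_sum_eq_sub_of_eq_of_ne hmem.1 fun x _ hx => by rw [colLen_erase_of_ne hx],
      sum_sub_sum_eq_sub_of_eq_of_ne hmem.2 fun y _ hy => by rw [rowLen_erase_of_ne hy]]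
    rw [hD.colLen_erase_of_isLastColumnTop hc, hD.rowLen_erase_of_isLastColumnTop hc,
      hD.colLen_of_isLastColumnTop hc, hD.rowLen_of_isLastColumnTop hc le_rfl]
    abel

theorem sum_crossings_before_lastColumnTop (hD : IsYoung D) (hc : IsLastColumnTop D x₀ y₀)
    {p q Q : ℕ} (hDQ : ∀ d ∈ D, d.2 < Q) (hlevel : q * x₀ + p * y₀ < p * Q) :
    ∑ x ∈ range x₀, (if q * x + p * colLen D x ≤ q * x₀ + p * y₀
        ∧ q * x₀ + p * y₀ < q * x + p * colLen D x + q then (1 : ℤ) else 0)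
      = ∑ y ∈ range Q, (if y₀ < y ∧ q * rowLen D y + p * y ≤ q * x₀ + p * y₀
        ∧ q * x₀ + p * y₀ < q * rowLen D y + p * y + p then (1 : ℤ) else 0) := by
  set E := {d ∈ D | d.1 < x₀}
  have hER : E ⊆ range x₀ ×ˢ range Q := fun d hd => by
    rw [mem_filter] at hd
    exact mem_product.2 ⟨mem_range.2 hd.2, mem_range.2 (hDQ d hd.1)⟩
  set g : ℕ → ℕ → ℤ := fun a b => if q * x₀ + p * y₀ < q * a + p * b then 1 else 0 with hg
  have hH : ∀ x ∈ range x₀, g (x + 1) (colLen E x) - g x (colLen E x)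
      = if q * x + p * colLen D x ≤ q * x₀ + p * y₀
        ∧ q * x₀ + p * y₀ < q * x + p * colLen D x + q then 1 else 0 := fun x hx => by
    simp only [E, colLen_filter_fst_lt (mem_range.1 hx), hg, mul_add, mul_one]
    split_ifs <;> omega
  have hV : ∀ y ∈ range Q, g (rowLen E y) y - g (rowLen E y) (y + 1)
      = -((if y = y₀ then 1 else 0) + if y₀ < y ∧ q * rowLen D y + p * y ≤ q * x₀ + p * y₀
        ∧ q * x₀ + p * y₀ < q * rowLen D y + p * y + p then 1 else 0) := fun y _ => by
    simp only [E, hD.rowLen_filter_fst_lt, hg, mul_add p, mul_one]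
    rcases lt_trichotomy y y₀ with hy | rfl | hy
    · have : p * y + p ≤ p * y₀ := by rw [← mul_add_one]; exact Nat.mul_le_mul_left p hy
      rw [hD.rowLen_of_isLastColumnTop hc hy.le, min_eq_right (Nat.le_succ x₀)]
      split_ifs <;> omega
    · have hp : 0 < p := Nat.pos_of_ne_zero (by rintro rfl; simp at hlevel)
      rw [hD.rowLen_of_isLastColumnTop hc le_rfl, min_eq_right (Nat.le_succ x₀)]
      split_ifs <;> omega
    · rw [min_eq_left (hD.rowLen_le_of_isLastColumnTop hc hy)]
      split_ifs <;> omega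
  have key := (hD.filter_fst_lt x₀).sum_boundary_telescope g hER
  rw [sum_congr rfl hH, sum_congr rfl hV, sum_neg_distrib, sum_add_distrib,
    sum_ite_eq' _ _ fun _ => (1 : ℤ), if_pos (mem_range.2 (hDQ _ hc.mem)), hg] at key
  simp only [mul_zero, add_zero, zero_add, if_pos hlevel] at key
  rw [if_neg (by omega)] at key
  linarith

end IsYoung

theorem mem_range_product_of_add_le {p q T P Q : ℕ} {c : ℕ × ℕ} (hp : 0 < p) (hq : 0 < q)
    (hP : q * P = T) (hQ : T ≤ p * Q) (h : q * c.1 + p * c.2 + p + q ≤ T) :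
    c ∈ range P ×ˢ range Q :=
  mem_product.2 ⟨mem_range.2 (Nat.lt_of_mul_lt_mul_left (a := q) (by omega)),
    mem_range.2 (Nat.lt_of_mul_lt_mul_left (a := p) (by omega))⟩

-- For `(x, y) ∈ D` one has `arm = rowLen y - x - 1` and `leg = colLen x - y - 1`, and outside `D`
-- `coArm = x - rowLen y`, `coLeg = y - colLen x`; so the first and third indicators are the hook
-- conditions of the theorem, and the sum of `hookDefect` over the rectangle is LHS - RHS.
def hookDefect (p q T : ℕ) (D : Finset (ℕ × ℕ)) (c : ℕ × ℕ) : ℤ :=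
  (if c ∈ D ∧ q * c.1 + p * colLen D c.1 + q ≤ q * rowLen D c.2 + p * c.2 then 1 else 0)
    + (if c ∉ D ∧ q * c.1 + p * c.2 + p + q ≤ T then 1 else 0)
    - (if c ∉ D ∧ q * rowLen D c.2 + p * c.2 + p ≤ q * c.1 + p * colLen D c.1 then 1 else 0)

theorem sum_hookDefect_empty {p q T P Q : ℕ} (hP : q * P = T) :
    ∑ c ∈ range P ×ˢ range Q, hookDefect p q T ∅ c = 0 := by
  simp only [hookDefect, colLen, rowLen, filter_empty, card_empty, notMem_empty, false_and,
    true_and, not_false_eq_true, if_false, mul_zero, add_zero, zero_add]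
  rw [sum_product_right]
  refine sum_eq_zero fun y _ => ?_
  rw [sum_sub_distrib, sub_eq_zero, ← sum_range_reflect]
  refine sum_congr rfl fun x hx => ?_
  have : q * (P - 1 - x) + q * x + q = T := by
    rw [← hP, ← mul_add, ← mul_add_one]
    congr 1
    have := mem_range.1 hx
    omega
  dsimp only
  split_ifs <;> omega

theorem hookDefect_erase_of_ne {p q T : ℕ} {D : Finset (ℕ × ℕ)} {c e : ℕ × ℕ} (h₁ : c.1 ≠ e.1)
    (h₂ : c.2 ≠ e.2) : hookDefect p q T (D.erase e) c = hookDefect p q T D c := by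
  have hce : c ≠ e := fun h => h₁ (congrArg Prod.fst h)
  simp only [hookDefect, mem_erase, ne_eq, hce, not_false_eq_true, true_and,
    colLen_erase_of_ne h₁, rowLen_erase_of_ne h₂]

namespace IsYoung

variable {D : Finset (ℕ × ℕ)} {x₀ y₀ p q T P Q : ℕ}

theorem hookDefect_sub_erase_column (hD : IsYoung D) (hc : IsLastColumnTop D x₀ y₀) (hp : 0 < p)
    (hT : q * x₀ + p * y₀ + p + q ≤ T) (y : ℕ) :
    hookDefect p q T D (x₀, y) - hookDefect p q T (D.erase (x₀, y₀)) (x₀, y)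
      = -(if y = y₀ then 1 else 0) - (if y₀ < y ∧ q * rowLen D y + p * y ≤ q * x₀ + p * y₀
          ∧ q * x₀ + p * y₀ < q * rowLen D y + p * y + p then 1 else 0) := by
  simp only [hookDefect, hD.mem_iff_lt_colLen, (hD.erase_isLastColumnTop hc).mem_iff_lt_colLen,
    hD.colLen_of_isLastColumnTop hc, hD.colLen_erase_of_isLastColumnTop hc]
  rcases lt_trichotomy y y₀ with hy | rfl | hy
  · have := Nat.mul_lt_mul_of_pos_left hy hp
    simp only [rowLen_erase_of_ne (c := (x₀, y₀)) hy.ne, hD.rowLen_of_isLastColumnTop hc hy.le,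
      mul_add, mul_one]
    split_ifs <;> omega
  · simp only [hD.rowLen_erase_of_isLastColumnTop hc, hD.rowLen_of_isLastColumnTop hc le_rfl,
      mul_add, mul_one]
    split_ifs <;> omega
  · simp only [rowLen_erase_of_ne (c := (x₀, y₀)) hy.ne', mul_add, mul_one]
    split_ifs <;> omega

theorem hookDefect_sub_erase_row (hD : IsYoung D) (hc : IsLastColumnTop D x₀ y₀) (hp : 0 < p)
    (hT : q * x₀ + p * y₀ + p + q ≤ T) (x : ℕ) :
    hookDefect p q T D (x, y₀) - hookDefect p q T (D.erase (x₀, y₀)) (x, y₀)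
      = (if x < x₀ ∧ q * x + p * colLen D x ≤ q * x₀ + p * y₀
          ∧ q * x₀ + p * y₀ < q * x + p * colLen D x + q then 1 else 0)
        - (if x = x₀ then 1 else 0)
        + (if q * x₀ + p * y₀ + p ≤ q * x ∧ q * x < q * x₀ + p * y₀ + p + q then 1 else 0) := by
  simp only [hookDefect, hD.mem_iff_lt_colLen, (hD.erase_isLastColumnTop hc).mem_iff_lt_colLen,
    hD.rowLen_of_isLastColumnTop hc le_rfl, hD.rowLen_erase_of_isLastColumnTop hc]
  rcases lt_trichotomy x x₀ with hx | rfl | hx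
  · have := hD.lt_colLen_of_isLastColumnTop hc hx.le
    have := Nat.mul_le_mul_left q hx.le
    simp only [colLen_erase_of_ne (c := (x₀, y₀)) hx.ne, mul_add, mul_one]
    split_ifs <;> omega
  · simp only [hD.colLen_of_isLastColumnTop hc, hD.colLen_erase_of_isLastColumnTop hc, mul_add,
      mul_one]
    split_ifs <;> omega
  · simp only [colLen_erase_of_ne (c := (x₀, y₀)) hx.ne',
      hD.colLen_eq_zero_of_isLastColumnTop hc hx, mul_add, mul_one]
    split_ifs <;> omega

theorem sum_hookDefect_erase (hD : IsYoung D) (hc : IsLastColumnTop D x₀ y₀)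
    (hp : 0 < p) (hq : 0 < q) (hP : q * P = T) (hQ : T ≤ p * Q)
    (hT : q * x₀ + p * y₀ + p + q ≤ T) (hDR : D ⊆ range P ×ˢ range Q) :
    ∑ c ∈ range P ×ˢ range Q, hookDefect p q T D c
      = ∑ c ∈ range P ×ˢ range Q, hookDefect p q T (D.erase (x₀, y₀)) c := by
  have hx₀ : x₀ < P := mem_range.1 (mem_product.1 (hDR hc.mem)).1
  have hy₀ : y₀ < Q := mem_range.1 (mem_product.1 (hDR hc.mem)).2
  have hcross := hD.sum_crossings_before_lastColumnTop hc
    (fun d hd => mem_range.1 (mem_product.1 (hDR hd)).2) (by omega : q * x₀ + p * y₀ < p * Q)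
  have hwindow := sum_range_ite_mul_mem_Ico (a := q * x₀ + p * y₀ + p) hq (by omega : _ ≤ q * P)
  have hbefore : ∑ x ∈ range P, (if x < x₀ ∧ q * x + p * colLen D x ≤ q * x₀ + p * y₀
        ∧ q * x₀ + p * y₀ < q * x + p * colLen D x + q then (1 : ℤ) else 0)
      = ∑ x ∈ range x₀, (if q * x + p * colLen D x ≤ q * x₀ + p * y₀
        ∧ q * x₀ + p * y₀ < q * x + p * colLen D x + q then 1 else 0) := by
    rw [← range_filter_lt hx₀.le, sum_filter]
    simp only [ite_and]
  rw [← sub_eq_zero, ← sum_sub_distrib,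
    sum_product_range_eq_of_eq_zero_off_cross _ hx₀ hy₀
      fun x y hx hy => by
        rw [hookDefect_erase_of_ne (c := (x, y)) (e := (x₀, y₀)) hx hy, sub_self],
    sum_congr rfl fun y _ => hD.hookDefect_sub_erase_column hc hp hT y,
    sum_congr rfl fun x _ => hD.hookDefect_sub_erase_row hc hp hT x,
    hD.hookDefect_sub_erase_column hc hp hT y₀]
  simp only [sum_sub_distrib, sum_add_distrib, sum_neg_distrib, sum_ite_eq', mem_range, hx₀,
    hy₀, if_true, hbefore, hwindow, hcross, lt_irrefl, false_and, if_false]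
  ring

theorem card_hook_add_card_triangle (hD : IsYoung D) (hp : 0 < p) (hq : 0 < q)
    (hP : q * P = T) (hQ : T ≤ p * Q) (hDT : ∀ c ∈ D, q * c.1 + p * c.2 + p + q ≤ T) :
    #{c ∈ range P ×ˢ range Q |
        c ∈ D ∧ q * c.1 + p * colLen D c.1 + q ≤ q * rowLen D c.2 + p * c.2}
      + #{c ∈ range P ×ˢ range Q | c ∉ D ∧ q * c.1 + p * c.2 + p + q ≤ T}
      = #{c ∈ range P ×ˢ range Q |
        c ∉ D ∧ q * rowLen D c.2 + p * c.2 + p ≤ q * c.1 + p * colLen D c.1} := by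
  suffices h : ∑ c ∈ range P ×ˢ range Q, hookDefect p q T D c = 0 by
    simp only [hookDefect, sum_add_distrib, sum_sub_distrib, ← natCast_card_filter] at h
    omega
  revert hDT
  refine induction_on_lastColumnTop ?_ (fun D x₀ y₀ hD hc ih hDT => ?_) D hD
  · exact fun _ => sum_hookDefect_empty hP
  · rw [hD.sum_hookDefect_erase hc hp hq hP hQ (hDT _ hc.mem)
      fun c hc => mem_range_product_of_add_le hp hq hP hQ (hDT c hc)]
    exact ih fun c hc => hDT c (mem_of_mem_erase hc)

theorem mul_leg_succ_le_mul_arm_iff (hD : IsYoung D) {x y : ℕ} (h : (x, y) ∈ D) :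
    p * (leg D (x, y) + 1) ≤ q * arm D (x, y)
      ↔ q * x + p * colLen D x + q ≤ q * rowLen D y + p * y := by
  have h₁ := congrArg (q * ·) (hD.arm_add_succ h)
  have h₂ := congrArg (p * ·) (hD.leg_add_succ h)
  simp only [mul_add, mul_one] at h₁ h₂ ⊢
  omega

theorem mul_coLeg_succ_le_mul_coArm_iff (hD : IsYoung D) {x y : ℕ} (h : (x, y) ∉ D) :
    p * (coLeg D (x, y) + 1) ≤ q * coArm D (x, y)
      ↔ q * rowLen D y + p * y + p ≤ q * x + p * colLen D x := by
  have h₁ := congrArg (q * ·) (hD.coArm_add_rowLen h)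
  have h₂ := congrArg (p * ·) (hD.coLeg_add_colLen h)
  simp only [mul_add, mul_one] at h₁ h₂ ⊢
  omega

end IsYoung

theorem GM_bijection_southeast_general (D : Finset (ℕ × ℕ)) (hD : IsYoung D)
    (p q K : ℕ) (hp : 0 < p) (hq : 0 < q)
    (hdiag : ∀ c ∈ D, q * c.1 + p * c.2 + p + q ≤ K * p * q) :
    (D.filter fun c => p * (leg D c + 1) ≤ q * arm D c).card
      + (((Finset.range (K * p)) ×ˢ (Finset.range (K * q))).filter
          fun c => q * c.1 + p * c.2 + p + q ≤ K * p * q ∧ c ∉ D).card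
      = (((Finset.range (K * p)) ×ˢ (Finset.range (K * q))).filter
          fun c => c ∉ D ∧ p * (coLeg D c + 1) ≤ q * coArm D c).card := by
  have hP : q * (K * p) = K * p * q := by ring
  have hQ : K * p * q ≤ p * (K * q) := (by ring : K * p * q = p * (K * q)).le
  convert hD.card_hook_add_card_triangle hp hq hP hQ hdiag using 2
  · refine congrArg card (ext fun ⟨x, y⟩ => ?_)
    simp only [mem_filter]
    constructor
    · rintro ⟨hc, h⟩
      exact ⟨mem_range_product_of_add_le hp hq hP hQ (hdiag _ hc), hc,
        (hD.mul_leg_succ_le_mul_arm_iff hc).1 h⟩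
    · rintro ⟨-, hc, h⟩
      exact ⟨hc, (hD.mul_leg_succ_le_mul_arm_iff hc).2 h⟩
  · exact congrArg card (filter_congr fun _ _ => and_comm)
  · exact filter_congr fun _ _ => and_congr_right hD.mul_coLeg_succ_le_mul_coArm_iff

theorem GM_bijection_southeast (D : Finset (ℕ × ℕ)) (hD : IsYoung D)
    (p q K : ℕ) (hp : 0 < p) (hq : 0 < q) (hK : 0 < K) (hpq : Nat.Coprime p q)
    (hdiag : ∀ c ∈ D, q * c.1 + p * c.2 + p + q ≤ K * p * q) :
    (D.filter fun c => p * (leg D c + 1) ≤ q * arm D c).card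
      + (((Finset.range (K * p)) ×ˢ (Finset.range (K * q))).filter
          fun c => q * c.1 + p * c.2 + p + q ≤ K * p * q ∧ c ∉ D).card
      = (((Finset.range (K * p)) ×ˢ (Finset.range (K * q))).filter
          fun c => c ∉ D ∧ p * (coLeg D c + 1) ≤ q * coArm D c).card :=
  GM_bijection_southeast_general D hD p q K hp hq hdiag
end
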